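/- arXiv:2505.15652 — 5 statements merged into one kernel-verified Lean document; each statement's English description precedes it below -/
import Mathlib

section
/- For every vertex v of G with √τ < d_v ≤ ℓ and every i ∈ {1,…,k}, Pr[v ∈ 𝓘 and v ∈ C_i⁺] ≥ (1/4) · Pr[v ∈ C_i⁺]; equivalently, conditioned on v ∈ C_i⁺, the vertex v joins the independent set 𝓘 with probability at least 1/4. -/
open MeasureTheory Real
open scoped ENNReal

/-- `log* x`: the least `n` such that the `n`-fold iterated natural logarithm of `x` is `≤ 1`. -/
noncomputable def logStar (x : ℝ) : ℕ := sInf {n : ℕ | Real.log^[n] x ≤ 1}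

/-- `τ = 1 / (log log log Δ)`. -/
noncomputable def tauOf (Δ : ℕ) : ℝ := 1 / Real.log (Real.log (Real.log Δ))

/-- `ℓ = (log*(1/τ))^{1/100}`. -/
noncomputable def ellOf (Δ : ℕ) : ℝ := (logStar (1 / tauOf Δ) : ℝ) ^ ((1 : ℝ) / 100)

/-- `β = log*(1/τ) / ℓ`. -/
noncomputable def betaOf (Δ : ℕ) : ℝ := (logStar (1 / tauOf Δ) : ℝ) / ellOf Δ

/-- `k = ⌊log*(1/τ) / 100⌋`. -/
noncomputable def kOf (Δ : ℕ) : ℕ := logStar (1 / tauOf Δ) / 100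

/-- Auxiliary sequence: `aw 0 = 10β`, `aw (n+1) = exp (ℓ · aw n) / (16ℓ)`. -/
noncomputable def aw (Δ : ℕ) : ℕ → ℝ
  | 0 => 10 * betaOf Δ
  | n + 1 => Real.exp (ellOf Δ * aw Δ n) / (16 * ellOf Δ)

/-- Paper-indexed sequence `a_i`: `awP Δ 1 = 10β` and `awP Δ (i+1) = exp (ℓ·awP Δ i)/(16ℓ)`
for `i ≥ 1`. -/
noncomputable def awP (Δ i : ℕ) : ℝ := aw Δ (i - 1)

/-- `d_v = Σ_{u ∼ v} p_u`, the total desire in the neighborhood of `v`. -/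
noncomputable def dW {V : Type*} [Fintype V] (G : SimpleGraph V) [DecidableRel G.Adj]
    (p : V → ℝ) (v : V) : ℝ :=
  ∑ u ∈ G.neighborFinset v, p u

/-- `v ∈ C⁻`: `d_v ≤ √τ` and `r_v ≤ β·p_v`. -/
def CminusMem {V : Type*} [Fintype V] (G : SimpleGraph V) [DecidableRel G.Adj]
    (Δ : ℕ) (p r : V → ℝ) (v : V) : Prop :=
  dW G p v ≤ Real.sqrt (tauOf Δ) ∧ r v ≤ betaOf Δ * p v

/-- `v ∈ C_i⁺`: `√τ < d_v ≤ ℓ`, `r_v ∈ I_{v,i} = (a_i p_v, a_{i+1} p_v]`, and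
`r_u ∈ J_{v,u,i} = (ℓ a_i p_u / d_v, 1]` for every neighbor `u` of `v`. -/
def CplusMem {V : Type*} [Fintype V] (G : SimpleGraph V) [DecidableRel G.Adj]
    (Δ : ℕ) (p r : V → ℝ) (i : ℕ) (v : V) : Prop :=
  Real.sqrt (tauOf Δ) < dW G p v ∧ dW G p v ≤ ellOf Δ ∧
  r v ∈ Set.Ioc (awP Δ i * p v) (awP Δ (i + 1) * p v) ∧
  ∀ u, G.Adj v u → r u ∈ Set.Ioc (ellOf Δ * (awP Δ i * p u) / dW G p v) 1

/-- `v ∈ C = C⁻ ∪ C₁⁺ ∪ … ∪ C_k⁺`. -/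
def CMem {V : Type*} [Fintype V] (G : SimpleGraph V) [DecidableRel G.Adj]
    (Δ : ℕ) (p r : V → ℝ) (v : V) : Prop :=
  CminusMem G Δ p r v ∨ ∃ i ∈ Finset.Icc 1 (kOf Δ), CplusMem G Δ p r i v

/-- `v ∈ 𝓘`: `v` is a candidate and no neighbor of `v` is a candidate. -/
def ISMem {V : Type*} [Fintype V] (G : SimpleGraph V) [DecidableRel G.Adj]
    (Δ : ℕ) (p r : V → ℝ) (v : V) : Prop :=
  CMem G Δ p r v ∧ ∀ u, G.Adj v u → ¬ CMem G Δ p r u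

/-- The ranks are independent and uniform on `[0,1]`: product Lebesgue measure on `[0,1]^V`. -/
noncomputable def rankMeasure (V : Type*) [Fintype V] : Measure (V → ℝ) :=
  Measure.pi fun _ => (volume : Measure ℝ).restrict (Set.Icc 0 1)

private lemma iter_log_aux : ∀ (n : ℕ) (x : ℝ), x ≤ n → ∃ m, Real.log^[m] x ≤ 1
  | 0, x, h => ⟨0, by simpa using h.trans (by norm_num)⟩
  | n+1, x, h => by
    by_cases hx : x ≤ 1
    · exact ⟨0, by simpa⟩
    · have hlog : Real.log x ≤ n := by
        have := Real.log_le_sub_one_of_pos (x := x) (by linarith)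
        push_cast at h ⊢
        linarith
      obtain ⟨m, hm⟩ := iter_log_aux n (Real.log x) hlog
      exact ⟨m+1, by rwa [Function.iterate_succ_apply]⟩

private lemma one_le_logStar {x : ℝ} (hx : 2 ≤ x) : 1 ≤ logStar x := by
  have hne : {n : ℕ | Real.log^[n] x ≤ 1}.Nonempty := by
    obtain ⟨n, hn⟩ := exists_nat_ge x
    exact iter_log_aux n x hn
  rw [logStar]
  by_contra h
  have h0 : sInf {n : ℕ | Real.log^[n] x ≤ 1} = 0 := by omega
  rcases Nat.sInf_eq_zero.mp h0 with h1 | h2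
  · simp only [Set.mem_setOf_eq, Function.iterate_zero_apply] at h1
    linarith
  · exact absurd h2 (Set.nonempty_iff_ne_empty.mp hne)

private lemma exp_ten_gt : (1000:ℝ) < Real.exp 10 := by
  have h := Real.exp_one_gt_d9
  have h2 : (2.7182818283:ℝ)^(10:ℕ) < (Real.exp 1)^(10:ℕ) :=
    pow_lt_pow_left₀ h (by norm_num) (by norm_num)
  have h3 : (Real.exp 1)^(10:ℕ) = Real.exp 10 := by
    rw [← Real.exp_nat_mul]; norm_num
  nlinarith [h2, h3]

private lemma one_le_N {Δ : ℕ} (hτ0 : 0 < tauOf Δ) (hτ1 : tauOf Δ ≤ 1/2) :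
    (1:ℝ) ≤ (logStar (1 / tauOf Δ) : ℝ) := by
  have : 1 ≤ logStar (1 / tauOf Δ) := by
    apply one_le_logStar
    rw [le_div_iff₀ hτ0]; linarith
  exact_mod_cast this

private lemma one_le_ell {Δ : ℕ} (hτ0 : 0 < tauOf Δ) (hτ1 : tauOf Δ ≤ 1/2) : 1 ≤ ellOf Δ := by
  have hN := one_le_N hτ0 hτ1
  rw [ellOf]
  calc (1:ℝ) = 1 ^ ((1:ℝ)/100) := (Real.one_rpow _).symm
  _ ≤ _ := Real.rpow_le_rpow (by norm_num) hN (by norm_num)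

private lemma one_le_beta {Δ : ℕ} (hτ0 : 0 < tauOf Δ) (hτ1 : tauOf Δ ≤ 1/2) : 1 ≤ betaOf Δ := by
  have hN := one_le_N hτ0 hτ1
  have hℓ1 := one_le_ell hτ0 hτ1
  have hℓN : ellOf Δ ≤ (logStar (1 / tauOf Δ) : ℝ) := by
    rw [ellOf]
    calc ((logStar (1 / tauOf Δ) : ℝ)) ^ ((1:ℝ)/100)
        ≤ ((logStar (1 / tauOf Δ) : ℝ)) ^ (1:ℝ) :=
          Real.rpow_le_rpow_of_exponent_le hN (by norm_num)
      _ = _ := Real.rpow_one _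
  rw [betaOf, le_div_iff₀ (by linarith)]
  linarith

private lemma aw_step {Δ : ℕ} (hτ0 : 0 < tauOf Δ) (hτ1 : tauOf Δ ≤ 1/2) {a : ℝ} (ha : 10 ≤ a) :
    a ≤ Real.exp (ellOf Δ * a) / (16 * ellOf Δ) := by
  have hℓ1 := one_le_ell hτ0 hτ1
  set y := ellOf Δ * a with hy
  have hy10 : 10 ≤ y := by nlinarith
  have h1 : y - 9 ≤ Real.exp (y - 10) := by
    have := Real.add_one_le_exp (y - 10); linarith
  have h2 : Real.exp 10 * (y - 9) ≤ Real.exp 10 * Real.exp (y - 10) :=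
    mul_le_mul_of_nonneg_left h1 (Real.exp_pos 10).le
  have h3 : Real.exp 10 * Real.exp (y - 10) = Real.exp y := by
    rw [← Real.exp_add]; ring_nf
  have h4 : 16 * y ≤ Real.exp y := by nlinarith [exp_ten_gt]
  rw [le_div_iff₀ (by positivity)]
  calc a * (16 * ellOf Δ) = 16 * y := by rw [hy]; ring
  _ ≤ Real.exp y := h4

private lemma ten_le_aw {Δ : ℕ} (hτ0 : 0 < tauOf Δ) (hτ1 : tauOf Δ ≤ 1/2) : ∀ n, 10 ≤ aw Δ n
  | 0 => by
    have := one_le_beta hτ0 hτ1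
    rw [aw]; linarith
  | n+1 => by
    have hn := ten_le_aw hτ0 hτ1 n
    rw [aw]
    exact hn.trans (aw_step hτ0 hτ1 hn)

private lemma aw_mono {Δ : ℕ} (hτ0 : 0 < tauOf Δ) (hτ1 : tauOf Δ ≤ 1/2) : Monotone (aw Δ) := by
  apply monotone_nat_of_le_succ
  intro n
  conv_rhs => rw [aw]
  exact aw_step hτ0 hτ1 (ten_le_aw hτ0 hτ1 n)

private lemma x_exp_le {x : ℝ} (hx : 10 ≤ x) : x * Real.exp (-x) ≤ 10 * Real.exp (-10) := by
  have h := Real.add_one_le_exp (x - 10)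
  have hmul : Real.exp 10 * Real.exp (x-10) = Real.exp x := by rw [← Real.exp_add]; ring_nf
  have h1 : Real.exp 10 * (x - 9) ≤ Real.exp x := by nlinarith [Real.exp_pos 10]
  have h2 : x * Real.exp 10 ≤ 10 * Real.exp x := by nlinarith [Real.exp_pos 10]
  rw [Real.exp_neg, Real.exp_neg, ← div_eq_mul_inv, ← div_eq_mul_inv,
    div_le_div_iff₀ (Real.exp_pos x) (Real.exp_pos 10)]
  linarith

set_option maxHeartbeats 1000000 in
theorem stmt9 {V : Type*} [Fintype V] [DecidableEq V]
    (G : SimpleGraph V) [DecidableRel G.Adj] (Δ : ℕ)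
    (hτ0 : 0 < tauOf Δ) (hτ1 : tauOf Δ ≤ 1 / 2)
    (hdeg : ∀ v, G.degree v ≤ Δ) (htri : G.CliqueFree 3)
    (p : V → ℝ) (hp : ∀ v, 0 ≤ p v ∧ p v ≤ tauOf Δ)
    (v : V) (hv1 : Real.sqrt (tauOf Δ) < dW G p v) (hv2 : dW G p v ≤ ellOf Δ)
    (i : ℕ) (hi : i ∈ Finset.Icc 1 (kOf Δ)) :
    ENNReal.ofReal (1 / 4) * rankMeasure V {r | CplusMem G Δ p r i v} ≤
      rankMeasure V {r | ISMem G Δ p r v ∧ CplusMem G Δ p r i v} := by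
  classical
  obtain ⟨hi1, hik⟩ := Finset.mem_Icc.mp hi
  have hℓ1 : 1 ≤ ellOf Δ := one_le_ell hτ0 hτ1
  have hℓ0 : (0:ℝ) < ellOf Δ := by linarith
  have hβ1 : 1 ≤ betaOf Δ := one_le_beta hτ0 hτ1
  have hd0 : 0 < dW G p v := lt_trans (Real.sqrt_pos.mpr hτ0) hv1
  set ℓ : ℝ := ellOf Δ with hℓdef
  set d : ℝ := dW G p v with hddef
  set a1 : ℝ := awP Δ i with ha1def
  set a2 : ℝ := awP Δ (i+1) with ha2def
  have h10a1 : 10 ≤ a1 := ten_le_aw hτ0 hτ1 _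
  have ha12 : a1 ≤ a2 := by
    rw [ha1def, ha2def, awP, awP]
    exact aw_mono hτ0 hτ1 (by omega)
  have h10a2 : 10 ≤ a2 := le_trans h10a1 ha12
  have hβa1 : betaOf Δ ≤ a1 := by
    have h0 : aw Δ 0 ≤ aw Δ (i-1) := aw_mono hτ0 hτ1 (Nat.zero_le _)
    rw [aw] at h0
    rw [ha1def, awP]
    linarith
  have hrec : a2 = Real.exp (ℓ * a1) / (16 * ℓ) := by
    obtain ⟨i', rfl⟩ : ∃ i', i = i'+1 := ⟨i-1, by omega⟩
    rw [ha1def, ha2def, awP, awP]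
    norm_num
    rw [aw]
  set x : ℝ := ℓ * a1 with hxdef
  have hx10 : 10 ≤ x := by nlinarith
  have hx0 : (0:ℝ) < x := by linarith
  -- the uniform measure on `[0,1]`
  obtain ⟨ν, hνdef⟩ : ∃ ν : Measure ℝ, ν = (volume : Measure ℝ).restrict (Set.Icc 0 1) :=
    ⟨_, rfl⟩
  have hμ : rankMeasure V = Measure.pi (fun _ : V => ν) := by rw [hνdef]; rfl
  haveI hνsf : SigmaFinite ν := by rw [hνdef]; infer_instance
  have hνuniv : ν Set.univ = 1 := by
    rw [hνdef, Measure.restrict_apply_univ, Real.volume_Icc]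
    norm_num
  have hνIoc : ∀ c : ℝ, 0 ≤ c → ν (Set.Ioc c 1) = ENNReal.ofReal (1 - c) := by
    intro c hc
    have hsub : Set.Ioc c 1 ⊆ Set.Icc 0 1 := by
      intro y hy
      exact ⟨le_of_lt (lt_of_le_of_lt hc hy.1), hy.2⟩
    rw [hνdef, Measure.restrict_apply measurableSet_Ioc,
      Set.inter_eq_left.mpr hsub, Real.volume_Ioc]
  have hνle : ∀ S : Set ℝ, ν S ≤ volume S := by
    intro S
    rw [hνdef]
    exact Measure.restrict_le_self S
  -- the candidate event as a box
  obtain ⟨FA, hFAdef⟩ : ∃ FA : V → Set ℝ, FA = fun w =>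
      if w = v then Set.Ioc (a1 * p v) (a2 * p v)
      else if G.Adj v w then Set.Ioc (ℓ * (a1 * p w) / d) 1
      else Set.univ := ⟨_, rfl⟩
  have hAset : {r : V → ℝ | CplusMem G Δ p r i v} = Set.univ.pi FA := by
    ext r
    simp only [Set.mem_setOf_eq, CplusMem, Set.mem_pi, Set.mem_univ, forall_true_left, hFAdef]
    constructor
    · rintro ⟨-, -, h1, h2⟩ w
      by_cases hw : w = v
      · subst hw; rw [if_pos rfl]; exact h1
      · rw [if_neg hw]
        by_cases ha : G.Adj v w
        · rw [if_pos ha]; exact h2 w ha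
        · rw [if_neg ha]; trivial
    · intro h
      refine ⟨hv1, hv2, ?_, ?_⟩
      · have := h v; rwa [if_pos rfl] at this
      · intro u hu
        have := h u
        rwa [if_neg (fun hh => G.irrefl (hh ▸ hu)), if_pos hu] at this
  -- weights
  obtain ⟨s, hsdef⟩ : ∃ s : V → ℝ, s = fun u =>
      if ℓ * (a1 * p u) / d ≤ 1/2 then Real.exp 1 * p u / (8 * ℓ)
      else Real.exp 1 * Real.exp (-x) := ⟨_, rfl⟩
  have hs0 : ∀ u, 0 ≤ s u := by
    intro u
    simp only [hsdef]
    split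
    · have := (hp u).1; positivity
    · positivity
  -- the per-neighbour bound
  have key : ∀ u ∈ G.neighborFinset v,
      rankMeasure V ({r | CplusMem G Δ p r i v} ∩ {r | CplusMem G Δ p r i u}) ≤
      ENNReal.ofReal (s u) * rankMeasure V {r | CplusMem G Δ p r i v} := by
    intro u hu
    rw [SimpleGraph.mem_neighborFinset] at hu
    have hpu := (hp u).1
    by_cases hdu1 : Real.sqrt (tauOf Δ) < dW G p u
    swap
    · have hE : {r : V → ℝ | CplusMem G Δ p r i u} = ∅ := by
        ext r
        simp only [Set.mem_setOf_eq, CplusMem, Set.mem_empty_iff_false, iff_false, not_and]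
        intro h; exact absurd h hdu1
      rw [hE, Set.inter_empty, measure_empty]
      exact zero_le
    by_cases hdu2 : dW G p u ≤ ℓ
    swap
    · have hE : {r : V → ℝ | CplusMem G Δ p r i u} = ∅ := by
        ext r
        simp only [Set.mem_setOf_eq, CplusMem, Set.mem_empty_iff_false, iff_false, not_and]
        intro _ h; exact absurd h hdu2
      rw [hE, Set.inter_empty, measure_empty]
      exact zero_le
    have hdu0 : 0 < dW G p u := lt_trans (Real.sqrt_pos.mpr hτ0) hdu1
    set du : ℝ := dW G p u with hdudef
    obtain ⟨FE, hFEdef⟩ : ∃ FE : V → Set ℝ, FE = fun w =>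
        if w = u then Set.Ioc (a1 * p u) (a2 * p u)
        else if G.Adj u w then Set.Ioc (ℓ * (a1 * p w) / du) 1
        else Set.univ := ⟨_, rfl⟩
    have hEset : {r : V → ℝ | CplusMem G Δ p r i u} = Set.univ.pi FE := by
      ext r
      simp only [Set.mem_setOf_eq, CplusMem, Set.mem_pi, Set.mem_univ, forall_true_left, hFEdef]
      constructor
      · rintro ⟨-, -, h1, h2⟩ w
        by_cases hw : w = u
        · subst hw; rw [if_pos rfl]; exact h1
        · rw [if_neg hw]
          by_cases ha : G.Adj u w
          · rw [if_pos ha]; exact h2 w ha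
          · rw [if_neg ha]; trivial
      · intro h
        refine ⟨hdu1, hdu2, ?_, ?_⟩
        · have := h u; rwa [if_pos rfl] at this
        · intro w hw
          have := h w
          rwa [if_neg (fun hh => G.irrefl (hh ▸ hw)), if_pos hw] at this
    rw [hAset, hEset, ← Set.pi_inter_distrib, hμ, Measure.pi_pi, Measure.pi_pi]
    by_cases hpv1 : ℓ * (a1 * p v) / du ≤ 1
    swap
    · have hFEv : FE v = ∅ := by
        simp only [hFEdef]
        rw [if_neg (G.ne_of_adj hu), if_pos hu.symm]
        exact Set.Ioc_eq_empty (fun hlt => hpv1 hlt.le)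
      refine le_trans (le_of_eq (Finset.prod_eq_zero (Finset.mem_univ v) ?_)) zero_le
      rw [hFEv, Set.inter_empty]
      exact measure_empty
    -- main case
    have hvu : v ≠ u := G.ne_of_adj hu
    have hvmem : v ∈ G.neighborFinset u := by
      rw [SimpleGraph.mem_neighborFinset]; exact hu.symm
    have hunotmem : u ∉ G.neighborFinset u := by
      simp [SimpleGraph.mem_neighborFinset]
    set T : Finset V := (G.neighborFinset u).erase v with hTdef
    have hsplit : ∀ f : V → ℝ≥0∞,
        ∏ w, f w = f u * (f v * ∏ w ∈ T, f w) *
          ∏ w ∈ (insert u (G.neighborFinset u))ᶜ, f w := by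
      intro f
      rw [← Finset.prod_mul_prod_compl (insert u (G.neighborFinset u)) f]
      congr 1
      rw [Finset.prod_insert hunotmem, ← Finset.mul_prod_erase _ f hvmem]
    have hFAu : FA u = Set.Ioc (ℓ * (a1 * p u) / d) 1 := by
      simp only [hFAdef]
      rw [if_neg (Ne.symm hvu), if_pos hu]
    have hFEu : FE u = Set.Ioc (a1 * p u) (a2 * p u) := by
      simp [hFEdef]
    have hFEv : FE v = Set.Ioc (ℓ * (a1 * p v) / du) 1 := by
      simp only [hFEdef]
      rw [if_neg (G.ne_of_adj hu), if_pos hu.symm]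
    have hTfa : ∀ w ∈ T, FA w = Set.univ := by
      intro w hw
      obtain ⟨hwv, hwN⟩ := Finset.mem_erase.mp hw
      rw [SimpleGraph.mem_neighborFinset] at hwN
      have hnadj : ¬ G.Adj v w := by
        intro hvw
        exact htri {v, u, w} (SimpleGraph.is3Clique_triple_iff.mpr ⟨hu, hvw, hwN⟩)
      simp only [hFAdef]
      rw [if_neg hwv, if_neg hnadj]
    have hTfe : ∀ w ∈ T, FE w = Set.Ioc (ℓ * (a1 * p w) / du) 1 := by
      intro w hw
      obtain ⟨hwv, hwN⟩ := Finset.mem_erase.mp hw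
      have hwu : w ≠ u := by
        intro hh; rw [hh] at hwN; exact hunotmem hwN
      rw [SimpleGraph.mem_neighborFinset] at hwN
      simp only [hFEdef]
      rw [if_neg hwu, if_pos hwN]
    have hcompl : ∀ w ∈ (insert u (G.neighborFinset u))ᶜ, FA w ∩ FE w = FA w := by
      intro w hw
      rw [Finset.mem_compl, Finset.mem_insert] at hw
      push_neg at hw
      have hFEw : FE w = Set.univ := by
        simp only [hFEdef]
        rw [if_neg hw.1, if_neg (fun h => hw.2 ((SimpleGraph.mem_neighborFinset _ _ _).mpr h))]
      rw [hFEw, Set.inter_univ]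
    have hcu0 : 0 ≤ ℓ * (a1 * p u) / d :=
      div_nonneg (mul_nonneg hℓ0.le (mul_nonneg (by linarith) hpu)) hd0.le
    have hνFAu : ν (FA u) = ENNReal.ofReal (1 - ℓ * (a1 * p u) / d) := by
      rw [hFAu]; exact hνIoc _ hcu0
    have hnum1 : ν (FA u ∩ FE u) ≤ ENNReal.ofReal (a2 * p u) := by
      calc ν (FA u ∩ FE u) ≤ volume (FA u ∩ FE u) := hνle _
      _ ≤ volume (FE u) := measure_mono Set.inter_subset_right
      _ = ENNReal.ofReal (a2 * p u - a1 * p u) := by rw [hFEu, Real.volume_Ioc]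
      _ ≤ _ := ENNReal.ofReal_le_ofReal (by nlinarith)
    have hnum2 : ν (FA u ∩ FE u) ≤ ENNReal.ofReal (1 - ℓ * (a1 * p u) / d) := by
      rw [← hνFAu]; exact measure_mono Set.inter_subset_left
    -- the T product is at most `e · exp (-x)`
    have hTprod : ∏ w ∈ T, ν (FA w ∩ FE w) ≤
        ENNReal.ofReal (Real.exp 1 * Real.exp (-x)) := by
      have hq0 : ∀ w : V, 0 ≤ ℓ * (a1 * p w) / du := fun w =>
        div_nonneg (mul_nonneg hℓ0.le (mul_nonneg (by linarith) (hp w).1)) hdu0.le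
      have hstep : ∀ w ∈ T, ν (FA w ∩ FE w) ≤
          ENNReal.ofReal (Real.exp (-(ℓ * (a1 * p w) / du))) := by
        intro w hw
        rw [hTfa w hw, Set.univ_inter, hTfe w hw, hνIoc _ (hq0 w)]
        apply ENNReal.ofReal_le_ofReal
        have := Real.add_one_le_exp (-(ℓ * (a1 * p w) / du))
        linarith
      have hsumT : p v + ∑ w ∈ T, p w = du := by
        rw [hTdef, Finset.add_sum_erase _ p hvmem, hdudef, dW]
      calc ∏ w ∈ T, ν (FA w ∩ FE w)
          ≤ ∏ w ∈ T, ENNReal.ofReal (Real.exp (-(ℓ * (a1 * p w) / du))) :=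
            Finset.prod_le_prod' hstep
      _ = ENNReal.ofReal (∏ w ∈ T, Real.exp (-(ℓ * (a1 * p w) / du))) :=
            (ENNReal.ofReal_prod_of_nonneg (fun _ _ => (Real.exp_pos _).le)).symm
      _ = ENNReal.ofReal (Real.exp (∑ w ∈ T, -(ℓ * (a1 * p w) / du))) := by
            rw [Real.exp_sum]
      _ ≤ _ := by
            apply ENNReal.ofReal_le_ofReal
            have hE : Real.exp 1 * Real.exp (-x) = Real.exp (1 - x) := by
              rw [← Real.exp_add]; ring_nf
            rw [hE]
            apply Real.exp_le_exp.mpr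
            have hsum2 : ∑ w ∈ T, -(ℓ * (a1 * p w) / du) = (-(ℓ * a1 / du)) * (du - p v) := by
              have : du - p v = ∑ w ∈ T, p w := by linarith
              rw [this, Finset.mul_sum]
              exact Finset.sum_congr rfl (fun w _ => by ring)
            rw [hsum2]
            have hexpand : (-(ℓ * a1 / du)) * (du - p v) = -(ℓ * a1) + ℓ * (a1 * p v) / du := by
              field_simp
              ring
            rw [hexpand]
            linarith [hpv1, hxdef.le, hxdef.ge]
    -- the key scalar inequality
    have hkey : ν (FA u ∩ FE u) * ENNReal.ofReal (Real.exp 1 * Real.exp (-x)) ≤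
        ENNReal.ofReal (s u) * ν (FA u) := by
      rw [hνFAu]
      simp only [hsdef]
      by_cases hcase : ℓ * (a1 * p u) / d ≤ 1/2
      · rw [if_pos hcase]
        have hee : (0:ℝ) ≤ Real.exp 1 * Real.exp (-x) := by positivity
        have hreal : a2 * p u * (Real.exp 1 * Real.exp (-x)) ≤
            Real.exp 1 * p u / (8 * ℓ) * (1 - ℓ * (a1 * p u) / d) := by
          have hid : a2 * p u * (Real.exp 1 * Real.exp (-x)) =
              Real.exp 1 * p u / (16 * ℓ) := by
            rw [hrec, Real.exp_neg]
            have hxne : Real.exp x ≠ 0 := (Real.exp_pos x).ne'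
            field_simp
          have hge : Real.exp 1 * p u / (8 * ℓ) * (1 - ℓ * (a1 * p u) / d) ≥
              Real.exp 1 * p u / (8 * ℓ) * (1/2) := by
            apply mul_le_mul_of_nonneg_left (by linarith)
            have := Real.exp_pos 1
            positivity
          have heq2 : Real.exp 1 * p u / (8 * ℓ) * (1/2) = Real.exp 1 * p u / (16 * ℓ) := by
            ring
          linarith [hid ▸ le_refl (a2 * p u * (Real.exp 1 * Real.exp (-x)))]
        calc ν (FA u ∩ FE u) * ENNReal.ofReal (Real.exp 1 * Real.exp (-x))
            ≤ ENNReal.ofReal (a2 * p u) * ENNReal.ofReal (Real.exp 1 * Real.exp (-x)) :=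
              mul_le_mul_left hnum1 _
        _ = ENNReal.ofReal (a2 * p u * (Real.exp 1 * Real.exp (-x))) :=
              (ENNReal.ofReal_mul (by nlinarith)).symm
        _ ≤ ENNReal.ofReal (Real.exp 1 * p u / (8 * ℓ) * (1 - ℓ * (a1 * p u) / d)) :=
              ENNReal.ofReal_le_ofReal hreal
        _ = _ := ENNReal.ofReal_mul (by have := Real.exp_pos 1; positivity)
      · rw [if_neg hcase]
        calc ν (FA u ∩ FE u) * ENNReal.ofReal (Real.exp 1 * Real.exp (-x))
            ≤ ENNReal.ofReal (1 - ℓ * (a1 * p u) / d) *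
              ENNReal.ofReal (Real.exp 1 * Real.exp (-x)) := mul_le_mul_left hnum2 _
        _ = _ := mul_comm _ _
    -- assemble
    rw [hsplit (fun w => ν (FA w ∩ FE w)), hsplit (fun w => ν (FA w))]
    have hTone : ∏ w ∈ T, ν (FA w) = 1 :=
      Finset.prod_eq_one (fun w hw => by rw [hTfa w hw]; exact hνuniv)
    have hcompl_eq : ∏ w ∈ (insert u (G.neighborFinset u))ᶜ, ν (FA w ∩ FE w) =
        ∏ w ∈ (insert u (G.neighborFinset u))ᶜ, ν (FA w) :=
      Finset.prod_congr rfl (fun w hw => by rw [hcompl w hw])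
    rw [hcompl_eq, hTone]
    have hFAvb : ν (FA v ∩ FE v) ≤ ν (FA v) := measure_mono Set.inter_subset_left
    calc ν (FA u ∩ FE u) * (ν (FA v ∩ FE v) * ∏ w ∈ T, ν (FA w ∩ FE w)) *
          ∏ w ∈ (insert u (G.neighborFinset u))ᶜ, ν (FA w)
        ≤ ν (FA u ∩ FE u) * (ν (FA v) * ENNReal.ofReal (Real.exp 1 * Real.exp (-x))) *
          ∏ w ∈ (insert u (G.neighborFinset u))ᶜ, ν (FA w) := by
          gcongr
    _ = (ν (FA u ∩ FE u) * ENNReal.ofReal (Real.exp 1 * Real.exp (-x))) * ν (FA v) *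
          ∏ w ∈ (insert u (G.neighborFinset u))ᶜ, ν (FA w) := by ring
    _ ≤ (ENNReal.ofReal (s u) * ν (FA u)) * ν (FA v) *
          ∏ w ∈ (insert u (G.neighborFinset u))ᶜ, ν (FA w) := by gcongr
    _ = ENNReal.ofReal (s u) * (ν (FA u) * (ν (FA v) * 1) *
          ∏ w ∈ (insert u (G.neighborFinset u))ᶜ, ν (FA w)) := by ring
  -- the sum of the weights is at most 3/4
  have hsum_s : ∑ u ∈ G.neighborFinset v, s u ≤ 3/4 := by
    have hbound : ∀ u ∈ G.neighborFinset v, s u ≤ Real.exp 1 * p u / (8 * ℓ) +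
        (if ℓ * (a1 * p u) / d ≤ 1/2 then 0 else Real.exp 1 * Real.exp (-x)) := by
      intro u _
      simp only [hsdef]
      by_cases hcase : ℓ * (a1 * p u) / d ≤ 1/2
      · rw [if_pos hcase, if_pos hcase, add_zero]
      · rw [if_neg hcase, if_neg hcase]
        have hpu := (hp u).1
        have h0 : 0 ≤ Real.exp 1 * p u / (8 * ℓ) := by positivity
        linarith
    have h1 : ∑ u ∈ G.neighborFinset v, Real.exp 1 * p u / (8 * ℓ) =
        Real.exp 1 / (8 * ℓ) * d := by
      rw [hddef, dW, Finset.mul_sum]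
      exact Finset.sum_congr rfl fun _ _ => by ring
    have h1b : Real.exp 1 / (8 * ℓ) * d ≤ Real.exp 1 / 8 := by
      have he := Real.exp_pos 1
      rw [div_mul_eq_mul_div, div_le_div_iff₀ (by positivity) (by norm_num)]
      nlinarith [hv2]
    set Tbig : Finset V := (G.neighborFinset v).filter (fun u => ¬ (ℓ * (a1 * p u) / d ≤ 1/2))
      with hTbigdef
    have h2 : ∑ u ∈ G.neighborFinset v,
        (if ℓ * (a1 * p u) / d ≤ 1/2 then (0:ℝ) else Real.exp 1 * Real.exp (-x)) =
        (Tbig.card : ℝ) * (Real.exp 1 * Real.exp (-x)) := by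
      rw [Finset.sum_ite, Finset.sum_const_zero, zero_add, Finset.sum_const, nsmul_eq_mul]
    have hcard : (Tbig.card : ℝ) ≤ 2 * x := by
      have hstep : ∀ u ∈ Tbig, d / (2 * x) ≤ p u := by
        intro u hu
        obtain ⟨-, hgt⟩ := Finset.mem_filter.mp hu
        push_neg at hgt
        rw [lt_div_iff₀ hd0] at hgt
        rw [div_le_iff₀ (by positivity)]
        nlinarith
      have hsum : (Tbig.card : ℝ) * (d / (2 * x)) ≤ d := by
        calc (Tbig.card : ℝ) * (d / (2 * x)) = ∑ _u ∈ Tbig, d / (2 * x) := by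
              rw [Finset.sum_const, nsmul_eq_mul]
        _ ≤ ∑ u ∈ Tbig, p u := Finset.sum_le_sum hstep
        _ ≤ ∑ u ∈ G.neighborFinset v, p u :=
              Finset.sum_le_sum_of_subset_of_nonneg (Finset.filter_subset _ _)
                (fun u _ _ => (hp u).1)
        _ = d := by rw [hddef, dW]
      have h2x : (0:ℝ) < 2 * x := by linarith
      have := mul_le_mul_of_nonneg_right hsum h2x.le
      rw [mul_assoc, div_mul_cancel₀ _ h2x.ne'] at this
      exact le_of_mul_le_mul_right (by linarith) hd0
    have h3 : (Tbig.card : ℝ) * (Real.exp 1 * Real.exp (-x)) ≤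
        20 * Real.exp 1 * Real.exp (-10) := by
      have hxe := x_exp_le hx10
      have he := (Real.exp_pos 1).le
      have hex := (Real.exp_pos (-x)).le
      calc (Tbig.card : ℝ) * (Real.exp 1 * Real.exp (-x))
          ≤ (2 * x) * (Real.exp 1 * Real.exp (-x)) := by
            apply mul_le_mul_of_nonneg_right hcard (by positivity)
      _ = 2 * Real.exp 1 * (x * Real.exp (-x)) := by ring
      _ ≤ 2 * Real.exp 1 * (10 * Real.exp (-10)) := by
            apply mul_le_mul_of_nonneg_left hxe (by positivity)
      _ = 20 * Real.exp 1 * Real.exp (-10) := by ring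
    have hnum : Real.exp 1 / 8 + 20 * Real.exp 1 * Real.exp (-10) ≤ 3/4 := by
      have he := Real.exp_one_lt_d9
      have he0 := (Real.exp_pos 1).le
      have h10 : Real.exp (-10) ≤ 1/1000 := by
        rw [Real.exp_neg]
        rw [inv_le_comm₀ (Real.exp_pos 10) (by norm_num)]
        norm_num
        linarith [exp_ten_gt]
      nlinarith [Real.exp_pos (-10)]
    calc ∑ u ∈ G.neighborFinset v, s u
        ≤ ∑ u ∈ G.neighborFinset v, (Real.exp 1 * p u / (8 * ℓ) +
            (if ℓ * (a1 * p u) / d ≤ 1/2 then 0 else Real.exp 1 * Real.exp (-x))) :=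
          Finset.sum_le_sum hbound
    _ = Real.exp 1 / (8 * ℓ) * d + (Tbig.card : ℝ) * (Real.exp 1 * Real.exp (-x)) := by
          rw [Finset.sum_add_distrib, h1, h2]
    _ ≤ 3/4 := by linarith
  -- deterministic part: given the candidate event for v, the only candidate neighbours
  -- are via level i
  set A : Set (V → ℝ) := {r | CplusMem G Δ p r i v} with hAdef
  set U : Set (V → ℝ) := ⋃ u ∈ G.neighborFinset v, (A ∩ {r | CplusMem G Δ p r i u}) with hUdef
  have hBsup : A \ U ⊆ {r | ISMem G Δ p r v ∧ CplusMem G Δ p r i v} := by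
    clear key hsum_s hAset hs0 hsdef hFAdef hμ hνuniv hνIoc hνle hνsf hνdef hrec
    clear FA s ν
    rintro r ⟨hrA, hrU⟩
    have hCv : CplusMem G Δ p r i v := hrA
    have hnot : ∀ u, G.Adj v u → ¬ CplusMem G Δ p r i u := by
      intro u hadj hCu
      exact hrU (Set.mem_biUnion ((SimpleGraph.mem_neighborFinset _ _ _).mpr hadj) ⟨hrA, hCu⟩)
    obtain ⟨-, -, hIv, hJv⟩ := hCv
    refine ⟨⟨Or.inr ⟨i, hi, hrA⟩, ?_⟩, hrA⟩
    intro u hadj hCMu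
    have hru := hJv u hadj
    have hpu := (hp u).1
    have hbase : a1 * p u ≤ ℓ * (a1 * p u) / d := by
      rw [le_div_iff₀ hd0]
      have h0 : 0 ≤ a1 * p u := mul_nonneg (by linarith) hpu
      nlinarith [hv2]
    rcases hCMu with hm | ⟨j, hj, hCj⟩
    · have h1 : r u ≤ betaOf Δ * p u := hm.2
      have h2 : betaOf Δ * p u ≤ a1 * p u := mul_le_mul_of_nonneg_right hβa1 hpu
      linarith [hru.1]
    · obtain ⟨hj1, hjk⟩ := Finset.mem_Icc.mp hj
      rcases lt_trichotomy j i with hji | rfl | hij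
      · have hru_le : r u ≤ awP Δ (j+1) * p u := hCj.2.2.1.2
        have hmono : awP Δ (j+1) ≤ a1 := by
          rw [ha1def, awP, awP]
          exact aw_mono hτ0 hτ1 (by omega)
        have : awP Δ (j+1) * p u ≤ a1 * p u := mul_le_mul_of_nonneg_right hmono hpu
        linarith [hru.1]
      · exact hnot u hadj hCj
      · have hrv_le : r v ≤ a2 * p v := hIv.2
        have hduℓ : dW G p u ≤ ℓ := hCj.2.1
        have hdu0 : 0 < dW G p u := lt_trans (Real.sqrt_pos.mpr hτ0) hCj.1
        have hrv_gt := (hCj.2.2.2 v hadj.symm).1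
        have hpv : 0 ≤ p v := (hp v).1
        have hmono : a2 ≤ awP Δ j := by
          rw [ha2def, awP, awP]
          exact aw_mono hτ0 hτ1 (by omega)
        have h1 : a2 * p v ≤ awP Δ j * p v := mul_le_mul_of_nonneg_right hmono hpv
        have h10j : 10 ≤ awP Δ j := ten_le_aw hτ0 hτ1 _
        have h2 : awP Δ j * p v ≤ ℓ * (awP Δ j * p v) / dW G p u := by
          rw [le_div_iff₀ hdu0]
          have h0 : 0 ≤ awP Δ j * p v := mul_nonneg (by linarith) hpv
          nlinarith
        linarith
  -- final assembly
  have hμA1 : rankMeasure V A ≤ 1 := by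
    calc rankMeasure V A ≤ rankMeasure V Set.univ := measure_mono (Set.subset_univ _)
    _ = 1 := by
        rw [hμ, Measure.pi_univ]
        simp [hνuniv]
  have hμAfin : rankMeasure V A ≠ ∞ := (lt_of_le_of_lt hμA1 ENNReal.one_lt_top).ne
  have hUB : rankMeasure V U ≤ ENNReal.ofReal (3/4) * rankMeasure V A := by
    calc rankMeasure V U
        ≤ ∑ u ∈ G.neighborFinset v, rankMeasure V (A ∩ {r | CplusMem G Δ p r i u}) :=
          measure_biUnion_finset_le _ _
    _ ≤ ∑ u ∈ G.neighborFinset v, ENNReal.ofReal (s u) * rankMeasure V A :=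
          Finset.sum_le_sum key
    _ = ENNReal.ofReal (∑ u ∈ G.neighborFinset v, s u) * rankMeasure V A := by
          rw [← Finset.sum_mul, ENNReal.ofReal_sum_of_nonneg (fun u _ => hs0 u)]
    _ ≤ _ := mul_le_mul_left (ENNReal.ofReal_le_ofReal hsum_s) _
  have h1 : rankMeasure V A ≤ rankMeasure V (A \ U) + rankMeasure V U :=
    (measure_mono (Set.subset_diff_union A U)).trans (measure_union_le _ _)
  have h2 : rankMeasure V (A \ U) ≤
      rankMeasure V {r | ISMem G Δ p r v ∧ CplusMem G Δ p r i v} := measure_mono hBsup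
  have hco : ENNReal.ofReal (1/4) * rankMeasure V A + ENNReal.ofReal (3/4) * rankMeasure V A =
      rankMeasure V A := by
    rw [← add_mul, ← ENNReal.ofReal_add (by norm_num) (by norm_num)]
    norm_num
  have hmain : ENNReal.ofReal (1/4) * rankMeasure V A + ENNReal.ofReal (3/4) * rankMeasure V A ≤
      rankMeasure V {r | ISMem G Δ p r v ∧ CplusMem G Δ p r i v} +
        ENNReal.ofReal (3/4) * rankMeasure V A := by
    rw [hco]
    exact h1.trans (add_le_add h2 hUB)
  have hfin2 : ENNReal.ofReal (3/4) * rankMeasure V A ≠ ∞ :=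
    ENNReal.mul_ne_top ENNReal.ofReal_ne_top hμAfin
  exact (ENNReal.add_le_add_iff_right hfin2).mp hmain
end

section
/- In any run of length T, for every vertex v ∈ V and every t ∈ {0,…,T−1}: if iteration t+1 is not golden for v and d^(t)_v > 1/ℓ, then d^(t+1)_v ≤ 2·d^(t)_v/ℓ. Moreover, for every t ∈ {0,…,T−1} and every v ∈ V one always has d^(t+1)_v ≤ ℓ·d^(t)_v. -/
open scoped Classical

section Run

variable {V : Type*} [Fintype V] [DecidableEq V]

/-- The hypotheses defining a run of length `T` of the weight-update process:
`Vt` is the decreasing chain of surviving vertex sets, `p` the weights, `d` the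
neighborhood desires, `golden t v` says that iteration `t+1` is golden for `v`,
and `g v` / `h v` count golden / degree-reduction iterations among `{1,…,T}`. -/
structure IsRun (G : SimpleGraph V) [DecidableRel G.Adj] (ℓ τ : ℝ) (Δ T : ℕ)
    (Vt : ℕ → Finset V) (p : ℕ → V → ℝ) (d : ℕ → V → ℝ)
    (golden : ℕ → V → Prop) (g h : V → ℕ) : Prop where
  hV0 : Vt 0 = Finset.univ
  hVmono : ∀ t, t < T → Vt (t + 1) ⊆ Vt t
  hp0 : ∀ v, p 0 v = τ
  hprange : ∀ t, t ≤ T → ∀ v, 0 < p t v ∧ p t v ≤ τ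
  hd : ∀ t v, d t v = ∑ u ∈ G.neighborFinset v ∩ Vt t, p t u
  hupd_high : ∀ t, t < T → ∀ v, ℓ < d t v → p (t + 1) v = p t v / ℓ
  hupd_low : ∀ t, t < T → ∀ v, d t v ≤ ℓ → p (t + 1) v = min (ℓ * p t v) τ
  hgolden : ∀ t v, golden t v ↔
    1 / ℓ ≤ d t v ∧
      d t v / (100 * ℓ ^ 2) ≤
        ∑ u ∈ (G.neighborFinset v ∩ Vt t).filter (fun u => d t u ≤ ℓ), p t u
  hg : ∀ v, g v = ((Finset.range T).filter fun t => golden t v).card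
  hh : ∀ v, h v = ((Finset.range T).filter fun t => p (t + 1) v = τ ∧ p t v = τ).card

end Run

theorem stmt14 {V : Type*} [Fintype V] [DecidableEq V]
    (G : SimpleGraph V) [DecidableRel G.Adj]
    (ℓ τ : ℝ) (hℓ : 4 ≤ ℓ) (hτ0 : 0 < τ) (hτ1 : τ ≤ 1)
    (Δ : ℕ) (hΔ : 2 ≤ Δ) (hdeg : ∀ v, G.degree v ≤ Δ)
    (T : ℕ) (hT : 0 < T)
    (Vt : ℕ → Finset V) (p : ℕ → V → ℝ) (d : ℕ → V → ℝ)
    (golden : ℕ → V → Prop) (g h : V → ℕ)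
    (hrun : IsRun G ℓ τ Δ T Vt p d golden g h)
    (v : V) (t : ℕ) (ht : t < T) :
    (¬ golden t v ∧ 1 / ℓ < d t v → d (t + 1) v ≤ 2 * d t v / ℓ) ∧
      d (t + 1) v ≤ ℓ * d t v := by
  obtain ⟨hV0, hVmono, hp0, hprange, hd, hupd_high, hupd_low, hgolden, hg, hh⟩ := hrun
  have hℓ0 : (0:ℝ) < ℓ := by linarith
  have hSsub : G.neighborFinset v ∩ Vt (t+1) ⊆ G.neighborFinset v ∩ Vt t :=
    Finset.inter_subset_inter_left (hVmono t ht)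
  have hppos : ∀ u : V, 0 < p t u := fun u => (hprange t ht.le u).1
  have hpbound : ∀ u : V, p (t+1) u ≤ ℓ * p t u := by
    intro u
    by_cases hc : d t u ≤ ℓ
    · rw [hupd_low t ht u hc]; exact min_le_left _ _
    · rw [hupd_high t ht u (lt_of_not_ge hc)]
      have hu := hppos u
      calc p t u / ℓ ≤ p t u := div_le_self hu.le (by linarith)
        _ ≤ ℓ * p t u := le_mul_of_one_le_left hu.le (by linarith)
  constructor
  · rintro ⟨hng, hdlow⟩
    have hd0 : 0 < d t v := lt_trans (by positivity) hdlow
    have hsum : ∑ u ∈ (G.neighborFinset v ∩ Vt t).filter (fun u => d t u ≤ ℓ), p t u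
        < d t v / (100 * ℓ ^ 2) := by
      rw [hgolden] at hng
      push_neg at hng
      exact hng hdlow.le
    set A := (G.neighborFinset v ∩ Vt (t+1)).filter (fun u => d t u ≤ ℓ) with hA
    set B := (G.neighborFinset v ∩ Vt (t+1)).filter (fun u => ¬ d t u ≤ ℓ) with hB
    have hsplit : d (t+1) v = (∑ u ∈ A, p (t+1) u) + ∑ u ∈ B, p (t+1) u := by
      rw [hd]
      exact (Finset.sum_filter_add_sum_filter_not _ _ _).symm
    have hAle : (∑ u ∈ A, p (t+1) u) ≤ ℓ * (d t v / (100 * ℓ ^ 2)) := by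
      calc ∑ u ∈ A, p (t+1) u ≤ ∑ u ∈ A, ℓ * p t u :=
            Finset.sum_le_sum fun u _ => hpbound u
        _ = ℓ * ∑ u ∈ A, p t u := by rw [Finset.mul_sum]
        _ ≤ ℓ * ∑ u ∈ (G.neighborFinset v ∩ Vt t).filter (fun u => d t u ≤ ℓ), p t u := by
            apply mul_le_mul_of_nonneg_left _ hℓ0.le
            exact Finset.sum_le_sum_of_subset_of_nonneg
              (Finset.filter_subset_filter _ hSsub) (fun u _ _ => (hppos u).le)
        _ ≤ ℓ * (d t v / (100 * ℓ ^ 2)) := mul_le_mul_of_nonneg_left hsum.le hℓ0.le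
    have hBle : (∑ u ∈ B, p (t+1) u) ≤ d t v / ℓ := by
      calc ∑ u ∈ B, p (t+1) u = ∑ u ∈ B, p t u / ℓ := by
            apply Finset.sum_congr rfl
            intro u hu
            exact hupd_high t ht u (lt_of_not_ge (Finset.mem_filter.mp hu).2)
        _ = (∑ u ∈ B, p t u) / ℓ := by rw [Finset.sum_div]
        _ ≤ (∑ u ∈ G.neighborFinset v ∩ Vt t, p t u) / ℓ := by
            have hBsub : B ⊆ G.neighborFinset v ∩ Vt t :=
              (Finset.filter_subset (fun u => ¬ d t u ≤ ℓ)
                (G.neighborFinset v ∩ Vt (t+1))).trans hSsub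
            gcongr
            exact fun u _ _ => (hppos u).le
        _ = d t v / ℓ := by rw [hd]
    have hkey : ℓ * (d t v / (100 * ℓ ^ 2)) = d t v / (100 * ℓ) := by
      field_simp
    have h2 : d t v / (100 * ℓ) ≤ d t v / ℓ := by
      apply div_le_div_of_nonneg_left hd0.le hℓ0
      linarith
    rw [hsplit]
    have : 2 * d t v / ℓ = d t v / ℓ + d t v / ℓ := by ring
    rw [this]
    linarith [hAle, hBle, hkey ▸ hAle]
  · rw [hd, hd, Finset.mul_sum]
    calc ∑ u ∈ G.neighborFinset v ∩ Vt (t+1), p (t+1) u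
        ≤ ∑ u ∈ G.neighborFinset v ∩ Vt (t+1), ℓ * p t u :=
          Finset.sum_le_sum fun u _ => hpbound u
      _ ≤ ∑ u ∈ G.neighborFinset v ∩ Vt t, ℓ * p t u :=
          Finset.sum_le_sum_of_subset_of_nonneg hSsub
            (fun u _ _ => (mul_pos hℓ0 (hppos u)).le)
end

section
/- Lemma (degree bound for non-good vertices): suppose additionally that Δ ≥ ℓ and T = ⌈10⁶·(log Δ)/(log ℓ)⌉, and let Y := {v ∈ V^(T) : g_v ≥ T/50}. Then in the subgraph of G induced on V^(T) ∖ Y, every vertex has degree at most 10·ℓ/τ. -/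
open scoped Classical

lemma walkCount (P : ℕ → Prop) (K : ℕ → ℕ) (hK0 : K 0 = 0)
    (hstep : ∀ t, K (t + 1) = if P t then K t + 1 else K t - 1) :
    ∀ n, ((Finset.range n).filter (fun t => K t ≠ 0)).card + K n
      ≤ 2 * ((Finset.range n).filter P).card := by
  intro n
  induction n with
  | zero => simp [hK0]
  | succ n ih =>
    rw [Finset.range_add_one, Finset.filter_insert, Finset.filter_insert]
    have hnotmem : n ∉ Finset.range n := by simp
    by_cases hP : P n
    · rw [if_pos hP, Finset.card_insert_of_notMem (fun hmem => hnotmem (Finset.mem_of_mem_filter _ hmem))]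
      have hK := hstep n
      rw [if_pos hP] at hK
      by_cases hKn : K n ≠ 0
      · rw [if_pos hKn, Finset.card_insert_of_notMem (fun hmem => hnotmem (Finset.mem_of_mem_filter _ hmem))]
        omega
      · rw [if_neg hKn]
        omega
    · rw [if_neg hP]
      have hK := hstep n
      rw [if_neg hP] at hK
      by_cases hKn : K n ≠ 0
      · rw [if_pos hKn, Finset.card_insert_of_notMem (fun hmem => hnotmem (Finset.mem_of_mem_filter _ hmem))]
        omega
      · rw [if_neg hKn]
        omega

set_option maxHeartbeats 2000000 in
theorem stmt15 {V : Type*} [Fintype V] [DecidableEq V]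
    (G : SimpleGraph V) [DecidableRel G.Adj]
    (ℓ τ : ℝ) (hℓ : 4 ≤ ℓ) (hτ0 : 0 < τ) (hτ1 : τ ≤ 1)
    (Δ : ℕ) (hΔ : 2 ≤ Δ) (hdeg : ∀ v, G.degree v ≤ Δ) (hΔℓ : ℓ ≤ (Δ : ℝ))
    (T : ℕ) (hT : T = ⌈(10 ^ 6 : ℝ) * Real.log Δ / Real.log ℓ⌉₊) (hTpos : 0 < T)
    (Vt : ℕ → Finset V) (p : ℕ → V → ℝ) (d : ℕ → V → ℝ)
    (golden : ℕ → V → Prop) (g h : V → ℕ)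
    (hrun : IsRun G ℓ τ Δ T Vt p d golden g h)
    (v : V) (hv : v ∈ Vt T) (hvY : ¬ ((T : ℝ) / 50 ≤ (g v : ℝ))) :
    (((G.neighborFinset v ∩
        (Vt T).filter fun u => ¬ ((T : ℝ) / 50 ≤ (g u : ℝ))).card : ℝ) ≤ 10 * ℓ / τ) := by
  obtain ⟨hV0, hVmono, hp0, hprange, hd, hupd_high, hupd_low, hgolden, hg, hh⟩ := hrun
  have hℓ0 : (0:ℝ) < ℓ := by linarith
  have hℓ1 : (1:ℝ) ≤ ℓ := by linarith
  -- the chain is decreasing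
  have hchain : ∀ t ≤ T, Vt T ⊆ Vt t := by
    have aux : ∀ k t, t + k ≤ T → Vt (t + k) ⊆ Vt t := by
      intro k
      induction k with
      | zero => intro t _; exact Finset.Subset.refl _
      | succ k ih =>
        intro t hle
        have h1 : Vt (t + k + 1) ⊆ Vt (t + k) := hVmono _ (by omega)
        exact h1.trans (ih t (by omega))
    intro t ht
    have := aux (T - t) t (by omega)
    rwa [show t + (T - t) = T by omega] at this
  -- p grows by at most a factor ℓ
  have hpt : ∀ t, t < T → ∀ u, p (t+1) u ≤ ℓ * p t u := by
    intro t ht u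
    have hp := (hprange t ht.le u).1
    by_cases hc : ℓ < d t u
    · rw [hupd_high t ht u hc]
      calc p t u / ℓ ≤ p t u := div_le_self hp.le hℓ1
        _ ≤ ℓ * p t u := le_mul_of_one_le_left hp.le hℓ1
    · rw [hupd_low t ht u (le_of_not_gt hc)]
      exact min_le_left _ _
  -- d grows by at most a factor ℓ
  have hgrow : ∀ t, t < T → ∀ w, d (t+1) w ≤ ℓ * d t w := by
    intro t ht w
    rw [hd (t+1) w, hd t w, Finset.mul_sum]
    calc ∑ u ∈ G.neighborFinset w ∩ Vt (t+1), p (t+1) u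
        ≤ ∑ u ∈ G.neighborFinset w ∩ Vt t, p (t+1) u := by
          apply Finset.sum_le_sum_of_subset_of_nonneg
          · exact Finset.inter_subset_inter (Finset.Subset.refl _) (hVmono t ht)
          · intro i _ _; exact (hprange (t+1) (by omega) i).1.le
      _ ≤ ∑ u ∈ G.neighborFinset w ∩ Vt t, ℓ * p t u :=
          Finset.sum_le_sum (fun i _ => hpt t ht i)
  -- d is nonneg
  have hdnn : ∀ t, t ≤ T → ∀ w, 0 ≤ d t w := by
    intro t ht w
    rw [hd t w]
    exact Finset.sum_nonneg (fun i _ => (hprange t ht i).1.le)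
  -- shrink on non-golden iterations with large desire
  have hshrink : ∀ t, t < T → ∀ w, ¬ golden t w → 1/ℓ ≤ d t w →
      d (t+1) w ≤ (101/100) * (d t w / ℓ) := by
    intro t ht w hng hdl
    have hS : ∑ u ∈ (G.neighborFinset w ∩ Vt t).filter (fun u => d t u ≤ ℓ), p t u
        ≤ d t w / (100 * ℓ^2) := by
      by_contra hcon
      exact hng ((hgolden t w).2 ⟨hdl, le_of_not_ge hcon⟩)
    have hsub : d (t+1) w ≤ ∑ u ∈ G.neighborFinset w ∩ Vt t, p (t+1) u := by
      rw [hd (t+1) w]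
      apply Finset.sum_le_sum_of_subset_of_nonneg
      · exact Finset.inter_subset_inter (Finset.Subset.refl _) (hVmono t ht)
      · intro i _ _; exact (hprange (t+1) (by omega) i).1.le
    have hsplit : ∑ u ∈ G.neighborFinset w ∩ Vt t, p (t+1) u
        = ∑ u ∈ (G.neighborFinset w ∩ Vt t).filter (fun u => d t u ≤ ℓ), p (t+1) u
          + ∑ u ∈ (G.neighborFinset w ∩ Vt t).filter (fun u => ¬ d t u ≤ ℓ), p (t+1) u :=
      (Finset.sum_filter_add_sum_filter_not _ _ _).symm
    have hlow : ∑ u ∈ (G.neighborFinset w ∩ Vt t).filter (fun u => d t u ≤ ℓ), p (t+1) u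
        ≤ ℓ * ∑ u ∈ (G.neighborFinset w ∩ Vt t).filter (fun u => d t u ≤ ℓ), p t u := by
      rw [Finset.mul_sum]
      apply Finset.sum_le_sum
      intro i hi
      rw [hupd_low t ht i (Finset.mem_filter.1 hi).2]
      exact min_le_left _ _
    have hhigh : ∑ u ∈ (G.neighborFinset w ∩ Vt t).filter (fun u => ¬ d t u ≤ ℓ), p (t+1) u
        ≤ (1/ℓ) * d t w := by
      have h1 : ∑ u ∈ (G.neighborFinset w ∩ Vt t).filter (fun u => ¬ d t u ≤ ℓ), p (t+1) u
          = ∑ u ∈ (G.neighborFinset w ∩ Vt t).filter (fun u => ¬ d t u ≤ ℓ), (1/ℓ) * p t u := by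
        apply Finset.sum_congr rfl
        intro i hi
        rw [hupd_high t ht i (lt_of_not_ge (Finset.mem_filter.1 hi).2)]
        ring
      rw [h1, ← Finset.mul_sum]
      have h2 : ∑ u ∈ (G.neighborFinset w ∩ Vt t).filter (fun u => ¬ d t u ≤ ℓ), p t u ≤ d t w := by
        rw [hd t w]
        apply Finset.sum_le_sum_of_subset_of_nonneg (Finset.filter_subset _ _)
        intro i _ _; exact (hprange t ht.le i).1.le
      have : (0:ℝ) ≤ 1/ℓ := by positivity
      exact mul_le_mul_of_nonneg_left h2 this
    have hSnn : (0:ℝ) ≤ ∑ u ∈ (G.neighborFinset w ∩ Vt t).filter (fun u => d t u ≤ ℓ), p t u :=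
      Finset.sum_nonneg (fun i _ => (hprange t ht.le i).1.le)
    have hℓ2 : (0:ℝ) < ℓ^2 := by positivity
    calc d (t+1) w ≤ _ := hsub
      _ = _ := hsplit
      _ ≤ ℓ * (d t w / (100 * ℓ^2)) + (1/ℓ) * d t w := by
          have := mul_le_mul_of_nonneg_left hS hℓ0.le
          linarith [hlow, hhigh]
      _ ≤ (101/100) * (d t w / ℓ) := by
          have heq : ℓ * (d t w / (100 * ℓ^2)) + (1/ℓ) * d t w = (101/100) * (d t w / ℓ) := by
            field_simp
            ring
          linarith
  -- step lemmas for the potential Φ t w = max (d t w) 1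
  have hstep1 : ∀ t, t < T → ∀ w, max (d (t+1) w) 1 ≤ ℓ * max (d t w) 1 := by
    intro t ht w
    apply max_le
    · exact (hgrow t ht w).trans (mul_le_mul_of_nonneg_left (le_max_left _ _) hℓ0.le)
    · calc (1:ℝ) ≤ ℓ := hℓ1
        _ = ℓ * 1 := (mul_one ℓ).symm
        _ ≤ ℓ * max (d t w) 1 := mul_le_mul_of_nonneg_left (le_max_right _ _) hℓ0.le
  have hstep2 : ∀ t, t < T → ∀ w, ¬ golden t w → max (d (t+1) w) 1 ≤ max (d t w) 1 := by
    intro t ht w hng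
    by_cases hc : 1/ℓ ≤ d t w
    · have h1 := hshrink t ht w hng hc
      have h2 : d (t+1) w ≤ d t w := by
        have hdpos : 0 < d t w := lt_of_lt_of_le (by positivity) hc
        have h3 : d t w / ℓ ≤ d t w / 4 := by
          apply div_le_div_of_nonneg_left hdpos.le (by norm_num) hℓ
        linarith
      exact max_le (h2.trans (le_max_left _ _)) (le_max_right _ _)
    · have h1 : d (t+1) w ≤ 1 := by
        have := hgrow t ht w
        have h2 : ℓ * d t w ≤ 1 := by
          push_neg at hc
          have h3 : d t w * ℓ < 1 := (lt_div_iff₀ hℓ0).1 hc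
          nlinarith
        linarith
      exact max_le (h1.trans (le_max_right _ _)) (le_max_right _ _)
  have hstep3 : ∀ t, t < T → ∀ w, ¬ golden t w → ℓ < d t w →
      max (d (t+1) w) 1 ≤ (101/(100*ℓ)) * max (d t w) 1 := by
    intro t ht w hng hdl
    have hdl' : 1/ℓ ≤ d t w := by
      have : 1/ℓ ≤ ℓ := by
        rw [div_le_iff₀ hℓ0]
        nlinarith
      linarith
    have h1 := hshrink t ht w hng hdl'
    have hmax : max (d t w) 1 = d t w := max_eq_left (by linarith)
    rw [hmax]
    have heq : (101/(100*ℓ)) * d t w = (101/100) * (d t w / ℓ) := by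
      field_simp
    rw [heq]
    apply max_le h1
    have : 1 < d t w / ℓ := by
      rw [lt_div_iff₀ hℓ0]
      linarith
    nlinarith
  -- the key multiplicative bound
  have hkey : ∀ w, (1:ℝ) ≤ (Δ:ℝ) * ℓ ^ (((Finset.range T).filter (fun s => golden s w)).card) *
      (101/(100*ℓ)) ^ (((Finset.range T).filter (fun s => ¬ golden s w ∧ ℓ < d s w)).card) := by
    intro w
    have hcpos : (0:ℝ) < 101/(100*ℓ) := by positivity
    have main : ∀ t, t ≤ T → max (d t w) 1 ≤
        max (d 0 w) 1 * ℓ ^ (((Finset.range t).filter (fun s => golden s w)).card) *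
          (101/(100*ℓ)) ^ (((Finset.range t).filter (fun s => ¬ golden s w ∧ ℓ < d s w)).card) := by
      intro t
      induction t with
      | zero => intro _; simp
      | succ t ih =>
        intro ht
        have ht' : t < T := ht
        have iht := ih ht'.le
        have hΦnn : (0:ℝ) ≤ max (d 0 w) 1 * ℓ ^ (((Finset.range t).filter (fun s => golden s w)).card) *
            (101/(100*ℓ)) ^ (((Finset.range t).filter (fun s => ¬ golden s w ∧ ℓ < d s w)).card) := by
          positivity
        have hnotmem : t ∉ Finset.range t := by simp
        rw [Finset.range_add_one, Finset.filter_insert, Finset.filter_insert]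
        by_cases hgo : golden t w
        · rw [if_pos hgo, if_neg (by simp [hgo]),
            Finset.card_insert_of_notMem (fun hm => hnotmem (Finset.mem_of_mem_filter _ hm)),
            pow_succ]
          calc max (d (t+1) w) 1 ≤ ℓ * max (d t w) 1 := hstep1 t ht' w
            _ ≤ ℓ * _ := mul_le_mul_of_nonneg_left iht hℓ0.le
            _ = _ := by ring
        · by_cases hdd : ℓ < d t w
          · rw [if_neg hgo, if_pos ⟨hgo, hdd⟩,
              Finset.card_insert_of_notMem (fun hm => hnotmem (Finset.mem_of_mem_filter _ hm)),
              pow_succ]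
            calc max (d (t+1) w) 1 ≤ (101/(100*ℓ)) * max (d t w) 1 := hstep3 t ht' w hgo hdd
              _ ≤ (101/(100*ℓ)) * _ := mul_le_mul_of_nonneg_left iht hcpos.le
              _ = _ := by ring
          · rw [if_neg hgo, if_neg (by simp [hgo, hdd])]
            exact (hstep2 t ht' w hgo).trans iht
    have hT' := main T le_rfl
    have h1 : (1:ℝ) ≤ max (d T w) 1 := le_max_right _ _
    have hd0 : max (d 0 w) 1 ≤ (Δ:ℝ) := by
      apply max_le
      · rw [hd 0 w, hV0]
        have : G.neighborFinset w ∩ Finset.univ = G.neighborFinset w := Finset.inter_univ _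
        rw [this]
        have : ∑ u ∈ G.neighborFinset w, p 0 u = (G.neighborFinset w).card * τ := by
          rw [Finset.sum_congr rfl (fun u _ => hp0 u), Finset.sum_const, nsmul_eq_mul]
        rw [this, G.card_neighborFinset_eq_degree w]
        calc (G.degree w : ℝ) * τ ≤ (Δ:ℝ) * 1 := by
              apply mul_le_mul _ hτ1 hτ0.le (by positivity)
              exact_mod_cast hdeg w
          _ = (Δ:ℝ) := mul_one _
      · exact_mod_cast Nat.one_le_cast.2 (by omega)
    calc (1:ℝ) ≤ max (d T w) 1 := h1
      _ ≤ _ := hT'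
      _ ≤ _ := by
          apply mul_le_mul_of_nonneg_right _ (by positivity)
          exact mul_le_mul_of_nonneg_right hd0 (by positivity)
  -- logarithm facts
  have hlogℓ : 1 ≤ Real.log ℓ := by
    rw [Real.le_log_iff_exp_le hℓ0]
    calc Real.exp 1 ≤ 2.7182818286 := Real.exp_one_lt_d9.le
      _ ≤ 4 := by norm_num
      _ ≤ ℓ := hℓ
  have hlogℓ0 : 0 < Real.log ℓ := by linarith
  have hlogΔ : 0 ≤ Real.log Δ := Real.log_nonneg (by exact_mod_cast Nat.one_le_cast.2 (by omega))
  have hTlog : Real.log Δ / Real.log ℓ ≤ (T:ℝ)/10^6 := by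
    have h1 : (10^6:ℝ) * Real.log Δ / Real.log ℓ ≤ T := by
      rw [hT]; exact Nat.le_ceil _
    rw [div_le_div_iff₀ hlogℓ0 (by norm_num : (0:ℝ) < 10^6)]
    rw [div_le_iff₀ hlogℓ0] at h1
    linarith
  -- bound on the number of shrinking non-golden iterations
  have hA : ∀ w, ¬ ((T:ℝ)/50 ≤ (g w : ℝ)) →
      ((((Finset.range T).filter (fun s => ¬ golden s w ∧ ℓ < d s w)).card : ℝ)
        ≤ 2*(T:ℝ)/10^6 + 2*((g w : ℝ))) := by
    intro w hgw
    set A := (((Finset.range T).filter (fun s => ¬ golden s w ∧ ℓ < d s w)).card) with hAdef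
    set Gc := (((Finset.range T).filter (fun s => golden s w)).card) with hGdef
    have hkw := hkey w
    have h2 : (ℓ:ℝ)^A ≤ (Δ:ℝ) * ℓ^Gc * (101/100)^A := by
      have hm := mul_le_mul_of_nonneg_left hkw (pow_nonneg hℓ0.le A)
      calc (ℓ:ℝ)^A = ℓ^A * 1 := (mul_one _).symm
        _ ≤ ℓ^A * ((Δ:ℝ) * ℓ^Gc * (101/(100*ℓ))^A) := hm
        _ = (Δ:ℝ) * ℓ^Gc * ((ℓ * (101/(100*ℓ)))^A) := by rw [mul_pow]; ring
        _ = (Δ:ℝ) * ℓ^Gc * (101/100)^A := by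
            rw [show ℓ * (101/(100*ℓ)) = 101/100 by field_simp]
    have h3 := Real.log_le_log (pow_pos hℓ0 A) h2
    rw [Real.log_pow, Real.log_mul (by positivity) (by positivity),
      Real.log_mul (by exact_mod_cast (by omega : 0 < Δ) : (0:ℝ) < (Δ:ℝ)).ne' (by positivity),
      Real.log_pow, Real.log_pow] at h3
    have h4 : Real.log (101/100) ≤ 1/100 := by
      have := Real.log_le_sub_one_of_pos (show (0:ℝ) < 101/100 by norm_num)
      linarith
    have hAnn : (0:ℝ) ≤ (A:ℝ) := Nat.cast_nonneg A
    have h5 : (A:ℝ) * Real.log (101/100) ≤ (A:ℝ) * (1/100) :=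
      mul_le_mul_of_nonneg_left h4 hAnn
    -- (99/100) * A * log ℓ ≤ log Δ + Gc * log ℓ
    have h6 : (99/100) * (A:ℝ) * Real.log ℓ ≤ Real.log Δ + (Gc:ℝ) * Real.log ℓ := by
      have h7 : (A:ℝ) * 1 ≤ (A:ℝ) * Real.log ℓ := mul_le_mul_of_nonneg_left hlogℓ hAnn
      linarith
    have h8 : (99/100) * (A:ℝ) ≤ Real.log Δ / Real.log ℓ + (Gc:ℝ) := by
      have h9 : (99/100) * (A:ℝ) ≤ (Real.log Δ + (Gc:ℝ) * Real.log ℓ) / Real.log ℓ := by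
        rw [le_div_iff₀ hlogℓ0]
        linarith
      have h10 : (Real.log Δ + (Gc:ℝ) * Real.log ℓ) / Real.log ℓ
          = Real.log Δ / Real.log ℓ + (Gc:ℝ) := by
        field_simp
      linarith
    have hgw' : (g w : ℝ) < (T:ℝ)/50 := lt_of_not_ge hgw
    have hGg : (Gc:ℝ) = (g w : ℝ) := by rw [hg w]
    rw [hGg] at h8
    have hXnn : (0:ℝ) ≤ Real.log Δ / Real.log ℓ := div_nonneg hlogΔ hlogℓ0.le
    have hgnn : (0:ℝ) ≤ (g w : ℝ) := Nat.cast_nonneg _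
    linarith
  -- bound on the number of high-desire iterations
  have hD : ∀ w, ¬ ((T:ℝ)/50 ≤ (g w : ℝ)) →
      ((((Finset.range T).filter (fun t => ℓ < d t w)).card : ℝ) ≤ 7/100 * (T:ℝ)) := by
    intro w hgw
    have hsub : (Finset.range T).filter (fun t => ℓ < d t w) ⊆
        ((Finset.range T).filter (fun s => golden s w)) ∪
          ((Finset.range T).filter (fun s => ¬ golden s w ∧ ℓ < d s w)) := by
      intro t htm
      rw [Finset.mem_filter] at htm
      rw [Finset.mem_union, Finset.mem_filter, Finset.mem_filter]
      by_cases hgo : golden t w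
      · exact Or.inl ⟨htm.1, hgo⟩
      · exact Or.inr ⟨htm.1, hgo, htm.2⟩
    have hcard := (Finset.card_le_card hsub).trans (Finset.card_union_le _ _)
    have hcard' : ((((Finset.range T).filter (fun t => ℓ < d t w)).card : ℝ)) ≤
        (((Finset.range T).filter (fun s => golden s w)).card : ℝ) +
          (((Finset.range T).filter (fun s => ¬ golden s w ∧ ℓ < d s w)).card : ℝ) := by
      exact_mod_cast hcard
    have hAw := hA w hgw
    have hgw' : (g w : ℝ) < (T:ℝ)/50 := lt_of_not_ge hgw
    have hGg : ((((Finset.range T).filter (fun s => golden s w)).card : ℝ)) = (g w : ℝ) := by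
      rw [hg w]
    rw [hGg] at hcard'
    have hTnn : (0:ℝ) ≤ (T:ℝ) := Nat.cast_nonneg T
    linarith
  -- the number of iterations where p is below τ is controlled
  have hwalk : ∀ u, (((Finset.range T).filter (fun t => ¬ p t u = τ)).card
      ≤ 2 * (((Finset.range T).filter (fun t => ℓ < d t u)).card)) := by
    intro u
    set K : ℕ → ℕ := fun n => Nat.rec 0 (fun t ih => if ℓ < d t u then ih + 1 else ih - 1) n
      with hKdef
    have hK0 : K 0 = 0 := rfl
    have hKs : ∀ t, K (t+1) = if ℓ < d t u then K t + 1 else K t - 1 := fun t => rfl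
    have hpK : ∀ t, t ≤ T → p t u = τ / ℓ ^ (K t) := by
      intro t
      induction t with
      | zero => intro _; rw [hp0, hK0, pow_zero, div_one]
      | succ t ih =>
        intro ht
        have ht' : t < T := ht
        have iht := ih ht'.le
        by_cases hc : ℓ < d t u
        · rw [hupd_high t ht' u hc, iht, hKs, if_pos hc, pow_succ, ← div_div]
        · rw [hupd_low t ht' u (le_of_not_gt hc), iht, hKs, if_neg hc]
          cases hKt : K t with
          | zero =>
            simp only [Nat.zero_sub, pow_zero, div_one]
            exact min_eq_right (le_mul_of_one_le_left hτ0.le hℓ1)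
          | succ k =>
            have he : ℓ * (τ / ℓ^(k+1)) = τ / ℓ^k := by
              field_simp
              ring
            rw [he, Nat.succ_sub_one]
            exact min_eq_left (div_le_self hτ0.le (one_le_pow₀ hℓ1))
    have hiff : ∀ t, t ≤ T → (¬ p t u = τ ↔ ¬ K t = 0) := by
      intro t ht
      rw [hpK t ht]
      constructor
      · intro hne hK
        rw [hK, pow_zero, div_one] at hne
        exact hne rfl
      · intro hK
        cases hKt : K t with
        | zero => exact absurd hKt hK
        | succ k =>
          have h1 : τ / ℓ ^ (k+1) < τ := by
            apply div_lt_self hτ0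
            apply one_lt_pow₀ (by linarith : (1:ℝ) < ℓ) (by omega)
          exact ne_of_lt h1
    have hfe : (Finset.range T).filter (fun t => ¬ p t u = τ)
        = (Finset.range T).filter (fun t => ¬ K t = 0) := by
      apply Finset.filter_congr
      intro t htm
      exact hiff t (Finset.mem_range.1 htm).le
    rw [hfe]
    have hwc := walkCount (fun t => ℓ < d t u) K hK0 hKs T
    have : ((Finset.range T).filter (fun t => ¬ K t = 0)).card
        = ((Finset.range T).filter (fun t => K t ≠ 0)).card := rfl
    omega
  -- final double counting
  set S := G.neighborFinset v ∩ (Vt T).filter (fun u => ¬ ((T:ℝ)/50 ≤ (g u : ℝ))) with hSdef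
  set Good := (Finset.range T).filter (fun t => d t v ≤ ℓ) with hGooddef
  have hT0 : (0:ℝ) < T := by exact_mod_cast hTpos
  have hnotle : (Finset.range T).filter (fun t => ¬ d t v ≤ ℓ)
      = (Finset.range T).filter (fun t => ℓ < d t v) := by
    apply Finset.filter_congr
    intro x _
    simp [not_le]
  -- each u in S has many τ-iterations
  have hgood : ∀ u ∈ S, ((86:ℝ)/100) * T ≤ (((Finset.range T).filter (fun t => p t u = τ)).card : ℝ) := by
    intro u hu
    have hgu : ¬ ((T:ℝ)/50 ≤ (g u : ℝ)) := by
      rw [hSdef] at hu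
      exact (Finset.mem_filter.1 (Finset.mem_inter.1 hu).2).2
    have h1 := hwalk u
    have h2 := hD u hgu
    have h3 : (((Finset.range T).filter (fun t => ¬ p t u = τ)).card : ℝ) ≤ 14/100 * T := by
      have h3' : (((Finset.range T).filter (fun t => ¬ p t u = τ)).card : ℝ)
          ≤ 2 * (((Finset.range T).filter (fun t => ℓ < d t u)).card : ℝ) := by
        exact_mod_cast h1
      linarith
    have h4 : ((Finset.range T).filter (fun t => p t u = τ)).card
        + ((Finset.range T).filter (fun t => ¬ p t u = τ)).card = T := by
      rw [Finset.card_filter_add_card_filter_not, Finset.card_range]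
    have h5 : (((Finset.range T).filter (fun t => p t u = τ)).card : ℝ)
        + (((Finset.range T).filter (fun t => ¬ p t u = τ)).card : ℝ) = (T:ℝ) := by
      exact_mod_cast h4
    linarith
  -- each u in S is τ-heavy at many Good times
  have hperu : ∀ u ∈ S, ((79:ℝ)/100) * T ≤ ((Good.filter (fun t => p t u = τ)).card : ℝ) := by
    intro u hu
    have h1 := hgood u hu
    have he : ((Finset.range T).filter (fun t => p t u = τ)).filter (fun t => d t v ≤ ℓ)
        = Good.filter (fun t => p t u = τ) := by
      rw [hGooddef, Finset.filter_comm]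
    have h2 := Finset.card_filter_add_card_filter_not
      (s := (Finset.range T).filter (fun t => p t u = τ)) (p := fun t => d t v ≤ ℓ)
    have h3 : (((Finset.range T).filter (fun t => p t u = τ)).filter (fun t => ¬ d t v ≤ ℓ)).card
        ≤ ((Finset.range T).filter (fun t => ¬ d t v ≤ ℓ)).card :=
      Finset.card_le_card (Finset.filter_subset_filter _ (Finset.filter_subset _ _))
    have h4 : (((Finset.range T).filter (fun t => ¬ d t v ≤ ℓ)).card : ℝ) ≤ 7/100 * T := by
      rw [hnotle]
      exact hD v hvY
    have h5 : ((Finset.range T).filter (fun t => p t u = τ)).card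
        ≤ (Good.filter (fun t => p t u = τ)).card
          + ((Finset.range T).filter (fun t => ¬ d t v ≤ ℓ)).card := by
      rw [← he]
      omega
    have h6 : (((Finset.range T).filter (fun t => p t u = τ)).card : ℝ)
        ≤ ((Good.filter (fun t => p t u = τ)).card : ℝ)
          + (((Finset.range T).filter (fun t => ¬ d t v ≤ ℓ)).card : ℝ) := by
      exact_mod_cast h5
    linarith
  -- at each Good time few vertices of S are τ-heavy
  have hcnt : ∀ t ∈ Good, ((S.filter (fun u => p t u = τ)).card : ℝ) ≤ ℓ / τ := by
    intro t htm
    rw [hGooddef, Finset.mem_filter] at htm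
    obtain ⟨htr, hdle⟩ := htm
    have htT : t ≤ T := (Finset.mem_range.1 htr).le
    have h1 : ∑ u ∈ S.filter (fun u => p t u = τ), p t u
        = ((S.filter (fun u => p t u = τ)).card : ℝ) * τ := by
      rw [Finset.sum_congr rfl (fun u hu => (Finset.mem_filter.1 hu).2), Finset.sum_const,
        nsmul_eq_mul]
    have h2 : S.filter (fun u => p t u = τ) ⊆ G.neighborFinset v ∩ Vt t := by
      intro u hu
      have hu' := (Finset.mem_filter.1 hu).1
      rw [hSdef] at hu'
      have h3 := Finset.mem_inter.1 hu'
      exact Finset.mem_inter.2 ⟨h3.1, hchain t htT (Finset.mem_of_mem_filter _ h3.2)⟩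
    have h4 : ∑ u ∈ S.filter (fun u => p t u = τ), p t u ≤ d t v := by
      rw [hd t v]
      exact Finset.sum_le_sum_of_subset_of_nonneg h2 (fun i _ _ => (hprange t htT i).1.le)
    rw [h1] at h4
    rw [le_div_iff₀ hτ0]
    linarith
  -- double counting
  have hswap : ∑ t ∈ Good, (S.filter (fun u => p t u = τ)).card
      = ∑ u ∈ S, (Good.filter (fun t => p t u = τ)).card := by
    simp only [Finset.card_filter]
    rw [Finset.sum_comm]
  have hlower : (S.card : ℝ) * ((79:ℝ)/100 * T)
      ≤ ∑ u ∈ S, ((Good.filter (fun t => p t u = τ)).card : ℝ) := by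
    calc (S.card:ℝ) * (79/100*T) = ∑ _u ∈ S, ((79:ℝ)/100*T) := by
          rw [Finset.sum_const, nsmul_eq_mul]
      _ ≤ _ := Finset.sum_le_sum (fun u hu => hperu u hu)
  have hupper : ∑ t ∈ Good, ((S.filter (fun u => p t u = τ)).card : ℝ) ≤ (T:ℝ) * (ℓ/τ) := by
    calc ∑ t ∈ Good, ((S.filter (fun u => p t u = τ)).card : ℝ)
        ≤ ∑ _t ∈ Good, (ℓ/τ) := Finset.sum_le_sum hcnt
      _ = (Good.card : ℝ) * (ℓ/τ) := by rw [Finset.sum_const, nsmul_eq_mul]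
      _ ≤ (T:ℝ) * (ℓ/τ) := by
          have hc : Good.card ≤ T := by
            rw [hGooddef]
            exact (Finset.card_filter_le _ _).trans (le_of_eq (Finset.card_range T))
          have hlt : (0:ℝ) ≤ ℓ/τ := by positivity
          exact mul_le_mul_of_nonneg_right (by exact_mod_cast hc) hlt
  have heq : ∑ u ∈ S, ((Good.filter (fun t => p t u = τ)).card : ℝ)
      = ∑ t ∈ Good, ((S.filter (fun u => p t u = τ)).card : ℝ) := by
    exact_mod_cast congrArg (Nat.cast : ℕ → ℝ) hswap.symm
  have hfinal : (S.card : ℝ) * (79/100 * T) ≤ (T:ℝ) * (ℓ/τ) := by linarith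
  have h1 : (S.card : ℝ) * (79/100) ≤ ℓ/τ := by
    have h1' : (S.card:ℝ) * (79/100) * (T:ℝ) ≤ (ℓ/τ) * (T:ℝ) := by linarith
    exact le_of_mul_le_mul_right h1' hT0
  have h2 : (0:ℝ) ≤ ℓ/τ := by positivity
  have h3 : 10 * ℓ / τ = 10 * (ℓ/τ) := by ring
  rw [h3]
  linarith
end

section
/- Theorem (one-round survival lower bound): let x, y_1, …, y_Δ be i.i.d. uniform random points of [0,1] and let S_1, …, S_Δ be independent uniform elements of 𝒮_{Δ−1}, all mutually independent. Then for every independence family 𝒱 (with measurable membership events), Pr[ (x, {y_1,…,y_Δ}) ∉ 𝒱 and (y_i, S_i ∪ {x}) ∉ 𝒱 for every i ∈ {1,…,Δ} ] ≥ 1/(2e) − 1/Δ. -/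
open MeasureTheory
open scoped ENNReal

/-- A set `𝒱 ⊆ [0,1] × 𝒮_Δ` (views leading to inclusion) is an *independence family* if for
every set `S` of `Δ+1` reals and all distinct `u, v ∈ S`, not both `(u, S∖{u})` and
`(v, S∖{v})` belong to `𝒱`. -/
def IndepFamily (Δ : ℕ) (𝒱 : Set (ℝ × Set ℝ)) : Prop :=
  (∀ q ∈ 𝒱, q.1 ∈ Set.Icc (0 : ℝ) 1 ∧ q.2.ncard = Δ) ∧
  ∀ S : Set ℝ, S.ncard = Δ + 1 → ∀ u ∈ S, ∀ v ∈ S, u ≠ v →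
    ¬((u, S \ {u}) ∈ 𝒱 ∧ (v, S \ {v}) ∈ 𝒱)

/-- The uniform measure on `[0,1]`. -/
noncomputable def unif : Measure ℝ := (volume : Measure ℝ).restrict (Set.Icc 0 1)

instance : IsProbabilityMeasure unif := ⟨by simp [unif, Real.volume_Icc]⟩

instance : MeasureTheory.NullSingletonClass unif :=
  ⟨fun x => le_antisymm ((Measure.restrict_le_self _).trans_eq (measure_singleton x)) zero_le⟩

namespace Stmt17

lemma mp_swapFun {n : ℕ} (j : Fin n) :
    MeasurePreserving (fun p : ℝ × (Fin n → ℝ) => (p.2 j, Function.update p.2 j p.1))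
      (unif.prod (Measure.pi fun _ => unif)) (unif.prod (Measure.pi fun _ => unif)) := by
  have h1 : MeasurePreserving (MeasurableEquiv.piFinSuccAbove (fun _ : Fin (n + 1) => ℝ) 0)
      (Measure.pi fun _ => unif) (unif.prod (Measure.pi fun _ => unif)) :=
    measurePreserving_piFinSuccAbove (fun _ => unif) 0
  have h2 : MeasurePreserving
      (MeasurableEquiv.piCongrLeft (fun _ : Fin (n+1) => ℝ) (Equiv.swap 0 j.succ))
      (Measure.pi fun _ => unif) (Measure.pi fun _ => unif) :=
    measurePreserving_piCongrLeft (fun _ => unif) (Equiv.swap 0 j.succ)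
  have comp := (h1.comp h2).comp (h1.symm _)
  convert comp using 1
  funext p
  show _ = (MeasurableEquiv.piFinSuccAbove (fun _ : Fin (n + 1) => ℝ) 0)
    ((MeasurableEquiv.piCongrLeft (fun _ : Fin (n+1) => ℝ) (Equiv.swap 0 j.succ))
      ((MeasurableEquiv.piFinSuccAbove (fun _ : Fin (n + 1) => ℝ) 0).symm p))
  have hsymm : ((MeasurableEquiv.piFinSuccAbove (fun _ : Fin (n + 1) => ℝ) 0).symm p)
      = Fin.cons p.1 p.2 := by
    simp [MeasurableEquiv.piFinSuccAbove, Fin.insertNthEquiv, Fin.insertNth_zero]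
  rw [hsymm]
  have hpc : ∀ (f : Fin (n+1) → ℝ) (i : Fin (n+1)),
      (MeasurableEquiv.piCongrLeft (fun _ : Fin (n+1) => ℝ) (Equiv.swap 0 j.succ)) f i
        = f (Equiv.swap 0 j.succ i) := by
    intro f i
    have := Equiv.piCongrLeft_apply_apply (fun _ : Fin (n+1) => ℝ) (Equiv.swap 0 j.succ) f
      (Equiv.swap 0 j.succ i)
    simpa [MeasurableEquiv.piCongrLeft, Equiv.swap_apply_self] using this
  ext
  · show p.2 j = _
    simp [MeasurableEquiv.piFinSuccAbove, Fin.insertNthEquiv, hpc, Equiv.swap_apply_left]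
  · show Function.update p.2 j p.1 _ = _
    rename_i k
    simp only [MeasurableEquiv.piFinSuccAbove, Fin.insertNthEquiv, MeasurableEquiv.coe_mk,
      Equiv.symm_symm, Equiv.coe_fn_symm_mk, hpc]
    rw [Fin.removeNth, hpc, Fin.zero_succAbove]
    by_cases hk : k = j
    · subst hk; simp [Equiv.swap_apply_right]
    · rw [Equiv.swap_apply_of_ne_of_ne (Fin.succ_ne_zero k)
        (by simpa using hk), Fin.cons_succ, Function.update_of_ne hk]

end Stmt17

namespace Stmt17

variable {α β γ δ : Type*} [MeasurableSpace α] [MeasurableSpace β] [MeasurableSpace γ]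
  [MeasurableSpace δ]

lemma mp_middle (μa : Measure α) (μb : Measure β) (μc : Measure γ) (μd : Measure δ)
    [SFinite μa] [SFinite μb] [SFinite μc] [SFinite μd] :
    MeasurePreserving (fun p : (α × β) × (γ × δ) => ((p.1.1, p.2.1), (p.1.2, p.2.2)))
      ((μa.prod μb).prod (μc.prod μd)) ((μa.prod μc).prod (μb.prod μd)) := by
  have h1 := measurePreserving_prodAssoc μa μb (μc.prod μd)
  have h2 := (MeasurePreserving.id μa).prod
    ((measurePreserving_prodAssoc μb μc μd).symm (MeasurableEquiv.prodAssoc))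
  have h3 := (MeasurePreserving.id μa).prod
    ((Measure.measurePreserving_swap (μ := μb) (ν := μc)).prod (MeasurePreserving.id μd))
  have h4 := (MeasurePreserving.id μa).prod (measurePreserving_prodAssoc μc μb μd)
  have h5 := (measurePreserving_prodAssoc μa μc (μb.prod μd)).symm
    (MeasurableEquiv.prodAssoc)
  exact h5.comp (h4.comp (h3.comp (h2.comp h1)))
end Stmt17

namespace Stmt17

/-- the big product measure -/
noncomputable def μΩ (a b : ℕ) : Measure (ℝ × (Fin a → ℝ) × (Fin a → Fin b → ℝ)) :=
  unif.prod ((Measure.pi fun _ => unif).prod (Measure.pi fun _ => Measure.pi fun _ => unif))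

instance (a b : ℕ) : IsProbabilityMeasure (μΩ a b) := by unfold μΩ; infer_instance

lemma mp_T {a b : ℕ} (j : Fin a) :
    MeasurePreserving (fun ω : ℝ × (Fin a → ℝ) × (Fin a → Fin b → ℝ) =>
      (ω.2.1 j, (Function.update ω.2.1 j ω.1, ω.2.2))) (μΩ a b) (μΩ a b) := by
  have h1 := (measurePreserving_prodAssoc unif (Measure.pi fun _ : Fin a => unif)
    (Measure.pi fun _ : Fin a => Measure.pi fun _ : Fin b => unif)).symm
    MeasurableEquiv.prodAssoc
  have h2 := (mp_swapFun j).prod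
    (MeasurePreserving.id (Measure.pi fun _ : Fin a => Measure.pi fun _ : Fin b => unif))
  have h3 := measurePreserving_prodAssoc unif (Measure.pi fun _ : Fin a => unif)
    (Measure.pi fun _ : Fin a => Measure.pi fun _ : Fin b => unif)
  exact h3.comp (h2.comp h1)

lemma mp_ρ {a b : ℕ} (i : Fin (a + 1)) (j : Fin b) :
    MeasurePreserving (fun ω : ℝ × (Fin (a+1) → ℝ) × (Fin (a+1) → Fin b → ℝ) =>
      (ω.1, (Function.update ω.2.1 i ((ω.2.2 i) j),
        Function.update ω.2.2 i (Function.update (ω.2.2 i) j (ω.2.1 i)))))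
      (μΩ (a+1) b) (μΩ (a+1) b) := by
  set κ : Measure (Fin b → ℝ) := Measure.pi fun _ => unif with hκ
  have hψ : MeasurePreserving (fun q : (Fin (a+1) → ℝ) × (Fin (a+1) → Fin b → ℝ) =>
      (Function.update q.1 i ((q.2 i) j),
        Function.update q.2 i (Function.update (q.2 i) j (q.1 i))))
      ((Measure.pi fun _ => unif).prod (Measure.pi fun _ => κ))
      ((Measure.pi fun _ => unif).prod (Measure.pi fun _ => κ)) := by
    have e1 := (measurePreserving_piFinSuccAbove (fun _ : Fin (a+1) => unif) i).prod
      (measurePreserving_piFinSuccAbove (fun _ : Fin (a+1) => κ) i)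
    have e2 := mp_middle unif (Measure.pi fun _ : Fin a => unif) κ
      (Measure.pi fun _ : Fin a => κ)
    have e3 := (mp_swapFun j).prod (MeasurePreserving.id
      ((Measure.pi fun _ : Fin a => unif).prod (Measure.pi fun _ : Fin a => κ)))
    have e4 := mp_middle unif κ (Measure.pi fun _ : Fin a => unif)
      (Measure.pi fun _ : Fin a => κ)
    have e5 := ((measurePreserving_piFinSuccAbove (fun _ : Fin (a+1) => unif) i).symm
        (MeasurableEquiv.piFinSuccAbove _ i)).prod
      ((measurePreserving_piFinSuccAbove (fun _ : Fin (a+1) => κ) i).symm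
        (MeasurableEquiv.piFinSuccAbove _ i))
    have comp := e5.comp (e4.comp (e3.comp (e2.comp e1)))
    convert comp using 1
    funext q
    show _ = ((MeasurableEquiv.piFinSuccAbove (fun _ : Fin (a+1) => ℝ) i).symm _,
      (MeasurableEquiv.piFinSuccAbove (fun _ : Fin (a+1) => Fin b → ℝ) i).symm _)
    simp only [MeasurableEquiv.piFinSuccAbove, MeasurableEquiv.coe_mk, Equiv.symm_symm,
      Fin.insertNthEquiv_apply, MeasurableEquiv.symm_mk, Equiv.coe_fn_mk, Equiv.coe_fn_symm_mk]
    ext1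
    · exact (Fin.insertNth_removeNth i _ q.1).symm
    · exact (Fin.insertNth_removeNth i _ q.2).symm
  exact (MeasurePreserving.id unif).prod hψ

end Stmt17

namespace Stmt17

lemma mp_fst {α β : Type*} [MeasurableSpace α] [MeasurableSpace β]
    (μ : Measure α) (ν : Measure β) [IsProbabilityMeasure ν] [SFinite μ] :
    MeasurePreserving Prod.fst (μ.prod ν) μ :=
  ⟨measurable_fst, by rw [Measure.map_fst_prod]; simp⟩

lemma mp_snd {α β : Type*} [MeasurableSpace α] [MeasurableSpace β]
    (μ : Measure α) (ν : Measure β) [IsProbabilityMeasure μ] [SFinite ν] :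
    MeasurePreserving Prod.snd (μ.prod ν) ν :=
  ⟨measurable_snd, by rw [Measure.map_snd_prod]; simp⟩

lemma mp_eval {X : Type*} [MeasurableSpace X] (m : Measure X) [IsProbabilityMeasure m] :
    ∀ {n : ℕ} (i : Fin n),
      MeasurePreserving (fun f : Fin n → X => f i) (Measure.pi fun _ => m) m := by
  intro n i
  cases n with
  | zero => exact i.elim0
  | succ m' =>
    exact (mp_fst m _).comp (measurePreserving_piFinSuccAbove (fun _ => m) i)

lemma mp_pair {X : Type*} [MeasurableSpace X] (m : Measure X) [IsProbabilityMeasure m]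
    {n : ℕ} {j k : Fin n} (hjk : j ≠ k) :
    MeasurePreserving (fun y : Fin n → X => (y j, y k)) (Measure.pi fun _ => m) (m.prod m) := by
  cases n with
  | zero => exact j.elim0
  | succ m' =>
    obtain ⟨k', hk'⟩ := Fin.exists_succAbove_eq (Ne.symm hjk)
    have h1 := measurePreserving_piFinSuccAbove (fun _ : Fin (m'+1) => m) j
    have h2 := (MeasurePreserving.id m).prod (mp_eval m k')
    have := h2.comp h1
    convert this using 1
    funext y
    show (y j, y k) = (y j, y (j.succAbove k'))
    rw [hk']

lemma null_pair {Ω : Type*} [MeasurableSpace Ω] {μ : Measure Ω} {u v : Ω → ℝ}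
    (h : MeasurePreserving (fun ω => (u ω, v ω)) μ (unif.prod unif)) :
    μ {ω | u ω = v ω} = 0 := by
  have hd : MeasurableSet {p : ℝ × ℝ | p.1 = p.2} :=
    measurableSet_eq_fun measurable_fst measurable_snd
  have : {ω | u ω = v ω} = (fun ω => (u ω, v ω)) ⁻¹' {p : ℝ × ℝ | p.1 = p.2} := rfl
  rw [this, h.measure_preimage hd.nullMeasurableSet]
  rw [Measure.prod_apply hd]
  have : ∀ x : ℝ, unif (Prod.mk x ⁻¹' {p : ℝ × ℝ | p.1 = p.2}) = 0 := by
    intro x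
    have : (Prod.mk x ⁻¹' {p : ℝ × ℝ | p.1 = p.2}) = {x} := by
      ext y; simp [eq_comm]
    rw [this, measure_singleton]
  simp [this]

end Stmt17

namespace Stmt17

lemma le_inv_card {Ω : Type*} [MeasurableSpace Ω] (μ : Measure Ω) [IsProbabilityMeasure μ]
    {N : ℕ} (f : Fin (N + 1) → Set Ω) (hm : ∀ k, MeasurableSet (f k))
    (hμ : ∀ k, μ (f k) = μ (f 0))
    (hdisj : Pairwise fun k l => μ (f k ∩ f l) = 0) :
    μ (f 0) ≤ ((N + 1 : ℕ) : ℝ≥0∞)⁻¹ := by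
  rw [ENNReal.le_inv_iff_mul_le]
  have h1 : μ (⋃ k, f k) = ∑' k, μ (f k) :=
    measure_iUnion₀ hdisj (fun k => (hm k).nullMeasurableSet)
  have h2 : ∑' k, μ (f k) = ((N + 1 : ℕ) : ℝ≥0∞) * μ (f 0) := by
    rw [tsum_fintype]
    have : ∀ k, μ (f k) = μ (f 0) := hμ
    rw [Finset.sum_congr rfl (fun k _ => this k), Finset.sum_const, Finset.card_univ,
      Fintype.card_fin, nsmul_eq_mul]
  calc μ (f 0) * ((N + 1 : ℕ) : ℝ≥0∞) = μ (⋃ k, f k) := by rw [h1, h2]; ring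
    _ ≤ 1 := prob_le_one

lemma range_update {ι : Type*} [DecidableEq ι] {y : ι → ℝ} (hy : Function.Injective y)
    {x : ℝ} (hx : x ∉ Set.range y) (j : ι) :
    Set.range (Function.update y j x) = insert x (Set.range y) \ {y j} := by
  ext a
  simp only [Set.mem_range, Set.mem_diff, Set.mem_insert_iff, Set.mem_singleton_iff]
  constructor
  · rintro ⟨k, rfl⟩
    rcases eq_or_ne k j with rfl | hk
    · rw [Function.update_self]
      exact ⟨Or.inl rfl, fun h => hx (h ▸ Set.mem_range_self k)⟩
    · rw [Function.update_of_ne hk]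
      exact ⟨Or.inr (Set.mem_range_self k), fun h => hk (hy h)⟩
  · rintro ⟨ha, hne⟩
    rcases ha with rfl | ⟨k, rfl⟩
    · exact ⟨j, Function.update_self j a y⟩
    · have hk : k ≠ j := fun h => hne (by rw [h])
      exact ⟨k, Function.update_of_ne hk x y⟩

end Stmt17

namespace Stmt17

variable {n : ℕ}

local notation "Ω'" => (ℝ × (Fin (n+2) → ℝ) × (Fin (n+2) → Fin (n+1) → ℝ))
local notation "μ'" => μΩ (n+2) (n+1)

lemma mpair_x_y (j : Fin (n+2)) :
    MeasurePreserving (fun ω : Ω' => (ω.1, ω.2.1 j)) μ' (unif.prod unif) :=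
  (MeasurePreserving.id unif).prod ((mp_eval unif j).comp
    (mp_fst (Measure.pi fun _ : Fin (n+2) => unif)
      (Measure.pi fun _ : Fin (n+2) => Measure.pi fun _ : Fin (n+1) => unif)))

lemma mpair_y_y {j k : Fin (n+2)} (hjk : j ≠ k) :
    MeasurePreserving (fun ω : Ω' => (ω.2.1 j, ω.2.1 k)) μ' (unif.prod unif) :=
  (mp_pair unif hjk).comp ((mp_fst (Measure.pi fun _ : Fin (n+2) => unif)
      (Measure.pi fun _ : Fin (n+2) => Measure.pi fun _ : Fin (n+1) => unif)).comp
    (mp_snd unif _))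

lemma mpair_x_s (i : Fin (n+2)) (j : Fin (n+1)) :
    MeasurePreserving (fun ω : Ω' => (ω.1, ω.2.2 i j)) μ' (unif.prod unif) :=
  (MeasurePreserving.id unif).prod ((mp_eval unif j).comp
    ((mp_eval (Measure.pi fun _ : Fin (n+1) => unif) i).comp
      (mp_snd (Measure.pi fun _ : Fin (n+2) => unif)
        (Measure.pi fun _ : Fin (n+2) => Measure.pi fun _ : Fin (n+1) => unif))))

lemma mpair_y_s (i : Fin (n+2)) (j : Fin (n+1)) :
    MeasurePreserving (fun ω : Ω' => (ω.2.1 i, ω.2.2 i j)) μ' (unif.prod unif) :=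
  ((mp_eval unif i).prod ((mp_eval unif j).comp
      (mp_eval (Measure.pi fun _ : Fin (n+1) => unif) i))).comp (mp_snd unif _)

lemma mpair_s_s (i : Fin (n+2)) {j k : Fin (n+1)} (hjk : j ≠ k) :
    MeasurePreserving (fun ω : Ω' => (ω.2.2 i j, ω.2.2 i k)) μ' (unif.prod unif) :=
  ((mp_pair unif hjk).comp (mp_eval (Measure.pi fun _ : Fin (n+1) => unif) i)).comp
    ((mp_snd (Measure.pi fun _ : Fin (n+2) => unif) _).comp (mp_snd unif _))

lemma nullDA :
    μ' {ω : Ω' | ¬(Function.Injective ω.2.1 ∧ ω.1 ∉ Set.range ω.2.1)} = 0 := by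
  have hsub : {ω : Ω' | ¬(Function.Injective ω.2.1 ∧ ω.1 ∉ Set.range ω.2.1)} ⊆
      (⋃ (j : Fin (n+2)) (k : Fin (n+2)), {ω : Ω' | j ≠ k ∧ ω.2.1 j = ω.2.1 k}) ∪
        ⋃ j : Fin (n+2), {ω : Ω' | ω.1 = ω.2.1 j} := by
    intro ω h
    by_cases hinj : Function.Injective ω.2.1
    · right
      have hx : ω.1 ∈ Set.range ω.2.1 := by
        by_contra hx; exact h ⟨hinj, hx⟩
      obtain ⟨j, hj⟩ := hx
      exact Set.mem_iUnion.2 ⟨j, hj.symm⟩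
    · left
      simp only [Function.Injective, not_forall] at hinj
      obtain ⟨a, b, hab, hne⟩ := hinj
      exact Set.mem_iUnion.2 ⟨a, Set.mem_iUnion.2 ⟨b, ⟨hne, hab⟩⟩⟩
  refine measure_mono_null hsub (measure_union_null ?_ ?_)
  · refine measure_iUnion_null fun j => measure_iUnion_null fun k => ?_
    rcases eq_or_ne j k with rfl | hjk
    · exact measure_mono_null (t := ∅) (fun ω h => absurd rfl h.1) measure_empty
    · exact measure_mono_null (fun ω h => h.2) (null_pair (mpair_y_y hjk))
  · exact measure_iUnion_null fun j => null_pair (mpair_x_y j)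

lemma nullDB (i : Fin (n+2)) :
    μ' {ω : Ω' | ¬(ω.1 ∉ Set.range (ω.2.2 i) ∧
      ω.2.1 i ∉ insert ω.1 (Set.range (ω.2.2 i)) ∧ Function.Injective (ω.2.2 i))} = 0 := by
  have hsub : {ω : Ω' | ¬(ω.1 ∉ Set.range (ω.2.2 i) ∧
      ω.2.1 i ∉ insert ω.1 (Set.range (ω.2.2 i)) ∧ Function.Injective (ω.2.2 i))} ⊆
      (⋃ j : Fin (n+1), {ω : Ω' | ω.1 = ω.2.2 i j}) ∪
      ({ω : Ω' | ω.2.1 i = ω.1} ∪ ⋃ j : Fin (n+1), {ω : Ω' | ω.2.1 i = ω.2.2 i j}) ∪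
      ⋃ (j : Fin (n+1)) (k : Fin (n+1)), {ω : Ω' | j ≠ k ∧ ω.2.2 i j = ω.2.2 i k} := by
    intro ω h
    simp only [Set.mem_setOf_eq, not_and_or, not_not] at h
    rcases h with h | h | h
    · exact Or.inl (Or.inl (Set.mem_iUnion.2 (by obtain ⟨j, hj⟩ := h; exact ⟨j, hj.symm⟩)))
    · rcases h with h | ⟨j, hj⟩
      · exact Or.inl (Or.inr (Or.inl h))
      · exact Or.inl (Or.inr (Or.inr (Set.mem_iUnion.2 ⟨j, hj.symm⟩)))
    · right
      simp only [Function.Injective, not_forall] at h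
      obtain ⟨a, b, hab, hne⟩ := h
      exact Set.mem_iUnion.2 ⟨a, Set.mem_iUnion.2 ⟨b, ⟨hne, hab⟩⟩⟩
  refine measure_mono_null hsub (measure_union_null (measure_union_null ?_ (measure_union_null ?_ ?_)) ?_)
  · exact measure_iUnion_null fun j => null_pair (mpair_x_s i j)
  · exact null_pair ((Measure.measurePreserving_swap).comp (mpair_x_y i))
  · exact measure_iUnion_null fun j => null_pair (mpair_y_s i j)
  · refine measure_iUnion_null fun j => measure_iUnion_null fun k => ?_
    rcases eq_or_ne j k with rfl | hjk
    · exact measure_mono_null (t := ∅) (fun ω h => absurd rfl h.1) measure_empty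
    · exact measure_mono_null (fun ω h => h.2) (null_pair (mpair_s_s i hjk))

end Stmt17

namespace Stmt17

lemma boundA {n : ℕ} {𝒱 : Set (ℝ × Set ℝ)} (h𝒱 : IndepFamily (n+2) 𝒱)
    (hA : MeasurableSet {ω : ℝ × (Fin (n+2) → ℝ) × (Fin (n+2) → Fin (n+1) → ℝ) |
      (ω.1, Set.range ω.2.1) ∈ 𝒱}) :
    μΩ (n+2) (n+1) {ω : ℝ × (Fin (n+2) → ℝ) × (Fin (n+2) → Fin (n+1) → ℝ) |
      (ω.1, Set.range ω.2.1) ∈ 𝒱} ≤ ((n + 3 : ℕ) : ℝ≥0∞)⁻¹ := by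
  set Ω' := ℝ × (Fin (n+2) → ℝ) × (Fin (n+2) → Fin (n+1) → ℝ)
  set A := {ω : Ω' | (ω.1, Set.range ω.2.1) ∈ 𝒱} with hAdef
  set T : Fin (n+2) → Ω' → Ω' :=
    fun j ω => (ω.2.1 j, (Function.update ω.2.1 j ω.1, ω.2.2)) with hTdef
  have hmT : ∀ j, MeasurePreserving (T j) (μΩ (n+2) (n+1)) (μΩ (n+2) (n+1)) := fun j => mp_T j
  set f : Fin (n+3) → Set Ω' := Fin.cons A (fun j => T j ⁻¹' A) with hfdef
  have hf0 : f 0 = A := rfl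
  have key : ∀ ω : Ω', (Function.Injective ω.2.1 ∧ ω.1 ∉ Set.range ω.2.1) → ∀ k, ω ∈ f k →
      ((Fin.cons ω.1 ω.2.1 : Fin (n+3) → ℝ) k,
        insert ω.1 (Set.range ω.2.1) \ {(Fin.cons ω.1 ω.2.1 : Fin (n+3) → ℝ) k}) ∈ 𝒱 := by
    rintro ω ⟨hinj, hxr⟩ k hk
    induction k using Fin.cases with
    | zero =>
      rw [Fin.cons_zero, Set.insert_diff_self_of_notMem hxr]
      exact hk
    | succ j =>
      rw [Fin.cons_succ, ← range_update hinj hxr j]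
      exact hk
  have hdisj : Pairwise fun k l => μΩ (n+2) (n+1) (f k ∩ f l) = 0 := by
    intro k l hkl
    refine measure_mono_null ?_ (nullDA (n := n))
    rintro ω ⟨hk, hl⟩
    simp only [Set.mem_setOf_eq]
    rintro ⟨hinj, hxr⟩
    have hc_inj : Function.Injective (Fin.cons ω.1 ω.2.1 : Fin (n+3) → ℝ) := by
      rw [Fin.cons_injective_iff]; exact ⟨hxr, hinj⟩
    have hS : insert ω.1 (Set.range ω.2.1) = Set.range (Fin.cons ω.1 ω.2.1 : Fin (n+3) → ℝ) :=
      (Fin.range_cons _ _).symm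
    have hncard : (insert ω.1 (Set.range ω.2.1)).ncard = (n+2) + 1 := by
      rw [hS, ← Set.image_univ, Set.ncard_image_of_injective _ hc_inj, Set.ncard_univ,
        Nat.card_eq_fintype_card, Fintype.card_fin]
    exact h𝒱.2 _ hncard _ (hS ▸ Set.mem_range_self k) _ (hS ▸ Set.mem_range_self l)
      (hc_inj.ne hkl) ⟨key ω ⟨hinj, hxr⟩ k hk, key ω ⟨hinj, hxr⟩ l hl⟩
  have hm : ∀ k, MeasurableSet (f k) := by
    intro k
    induction k using Fin.cases with
    | zero => exact hA
    | succ j => exact (hmT j).measurable hA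
  have hμ : ∀ k, μΩ (n+2) (n+1) (f k) = μΩ (n+2) (n+1) (f 0) := by
    intro k
    induction k using Fin.cases with
    | zero => rfl
    | succ j => exact (hmT j).measure_preimage hA.nullMeasurableSet
  have := le_inv_card (μΩ (n+2) (n+1)) f hm hμ hdisj
  rw [hf0] at this
  exact_mod_cast this

end Stmt17

namespace Stmt17

lemma boundB {n : ℕ} {𝒱 : Set (ℝ × Set ℝ)} (h𝒱 : IndepFamily (n+2) 𝒱) (i : Fin (n+2))
    (hB : MeasurableSet {ω : ℝ × (Fin (n+2) → ℝ) × (Fin (n+2) → Fin (n+1) → ℝ) |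
      (ω.2.1 i, insert ω.1 (Set.range (ω.2.2 i))) ∈ 𝒱}) :
    μΩ (n+2) (n+1) {ω : ℝ × (Fin (n+2) → ℝ) × (Fin (n+2) → Fin (n+1) → ℝ) |
      (ω.2.1 i, insert ω.1 (Set.range (ω.2.2 i))) ∈ 𝒱} ≤ ((n + 3 : ℕ) : ℝ≥0∞)⁻¹ := by
  set Ω' := ℝ × (Fin (n+2) → ℝ) × (Fin (n+2) → Fin (n+1) → ℝ)
  set B := {ω : Ω' | (ω.2.1 i, insert ω.1 (Set.range (ω.2.2 i))) ∈ 𝒱} with hBdef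
  set T : Ω' → Ω' :=
    fun ω => (ω.2.1 i, (Function.update ω.2.1 i ω.1, ω.2.2)) with hTdef
  set R : Fin (n+1) → Ω' → Ω' := fun j ω => (ω.1, (Function.update ω.2.1 i ((ω.2.2 i) j),
        Function.update ω.2.2 i (Function.update (ω.2.2 i) j (ω.2.1 i)))) with hRdef
  have hmT : MeasurePreserving T (μΩ (n+2) (n+1)) (μΩ (n+2) (n+1)) := mp_T i
  have hmR : ∀ j, MeasurePreserving (R j) (μΩ (n+2) (n+1)) (μΩ (n+2) (n+1)) :=
    fun j => mp_ρ (a := n+1) (b := n+1) i j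
  set f : Fin (n+3) → Set Ω' := Fin.cons B (Fin.cons (T ⁻¹' B) (fun j => R j ⁻¹' B)) with hfdef
  have hf0 : f 0 = B := rfl
  set D : Set Ω' := {ω : Ω' | ω.1 ∉ Set.range (ω.2.2 i) ∧
      ω.2.1 i ∉ insert ω.1 (Set.range (ω.2.2 i)) ∧ Function.Injective (ω.2.2 i)} with hDdef
  have key : ∀ ω : Ω', ω ∈ D → ∀ k, ω ∈ f k →
      ((Fin.cons (ω.2.1 i) (Fin.cons ω.1 (ω.2.2 i)) : Fin (n+3) → ℝ) k,
        insert (ω.2.1 i) (insert ω.1 (Set.range (ω.2.2 i)))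
          \ {(Fin.cons (ω.2.1 i) (Fin.cons ω.1 (ω.2.2 i)) : Fin (n+3) → ℝ) k}) ∈ 𝒱 := by
    rintro ω ⟨hxr, hyi, hinj⟩ k hk
    have hyiR : ω.2.1 i ∉ Set.range (ω.2.2 i) := fun h => hyi (Set.mem_insert_of_mem _ h)
    have hx_ne_yi : ω.1 ≠ ω.2.1 i := fun h => hyi (h ▸ Set.mem_insert _ _)
    induction k using Fin.cases with
    | zero =>
      rw [Fin.cons_zero, Set.insert_diff_self_of_notMem hyi]
      exact hk
    | succ j =>
      induction j using Fin.cases with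
      | zero =>
        rw [Fin.cons_succ, Fin.cons_zero]
        have hset : insert (ω.2.1 i) (insert ω.1 (Set.range (ω.2.2 i))) \ {ω.1}
            = insert (ω.2.1 i) (Set.range (ω.2.2 i)) := by
          rw [Set.insert_comm, Set.insert_diff_self_of_notMem]
          rintro (h | h)
          · exact hx_ne_yi h
          · exact hxr h
        rw [hset]
        have hmem : ω ∈ T ⁻¹' B := hk
        simp only [Set.mem_preimage, hBdef, Set.mem_setOf_eq, hTdef,
          Function.update_self] at hmem
        exact hmem
      | succ j' =>
        rw [Fin.cons_succ, Fin.cons_succ]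
        have hmem : ω ∈ R j' ⁻¹' B := hk
        simp only [Set.mem_preimage, hBdef, Set.mem_setOf_eq, hRdef,
          Function.update_self] at hmem
        have hx_ne_s : ω.1 ≠ ω.2.2 i j' := fun h => hxr (h ▸ Set.mem_range_self j')
        have hset : insert (ω.2.1 i) (insert ω.1 (Set.range (ω.2.2 i))) \ {ω.2.2 i j'}
            = insert ω.1 (Set.range (Function.update (ω.2.2 i) j' (ω.2.1 i))) := by
          rw [range_update hinj hyiR j', Set.insert_comm,
            Set.insert_diff_singleton_comm hx_ne_s]
        rw [hset]
        exact hmem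
  have hdisj : Pairwise fun k l => μΩ (n+2) (n+1) (f k ∩ f l) = 0 := by
    intro k l hkl
    refine measure_mono_null ?_ (nullDB (n := n) i)
    rintro ω ⟨hk, hl⟩
    simp only [Set.mem_setOf_eq]
    rintro ⟨hxr, hyi, hinj⟩
    have hc_inj : Function.Injective
        (Fin.cons (ω.2.1 i) (Fin.cons ω.1 (ω.2.2 i)) : Fin (n+3) → ℝ) := by
      rw [Fin.cons_injective_iff]
      constructor
      · rw [Fin.range_cons]; exact hyi
      · rw [Fin.cons_injective_iff]; exact ⟨hxr, hinj⟩
    have hS : insert (ω.2.1 i) (insert ω.1 (Set.range (ω.2.2 i)))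
        = Set.range (Fin.cons (ω.2.1 i) (Fin.cons ω.1 (ω.2.2 i)) : Fin (n+3) → ℝ) := by
      rw [Fin.range_cons, Fin.range_cons]
    have hncard : (insert (ω.2.1 i) (insert ω.1 (Set.range (ω.2.2 i)))).ncard = (n+2) + 1 := by
      rw [hS, ← Set.image_univ, Set.ncard_image_of_injective _ hc_inj, Set.ncard_univ,
        Nat.card_eq_fintype_card, Fintype.card_fin]
    exact h𝒱.2 _ hncard _ (hS ▸ Set.mem_range_self k) _ (hS ▸ Set.mem_range_self l)
      (hc_inj.ne hkl) ⟨key ω ⟨hxr, hyi, hinj⟩ k hk, key ω ⟨hxr, hyi, hinj⟩ l hl⟩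
  have hm : ∀ k, MeasurableSet (f k) := by
    intro k
    induction k using Fin.cases with
    | zero => exact hB
    | succ j =>
      induction j using Fin.cases with
      | zero => exact hmT.measurable hB
      | succ j' => exact (hmR j').measurable hB
  have hμ : ∀ k, μΩ (n+2) (n+1) (f k) = μΩ (n+2) (n+1) (f 0) := by
    intro k
    induction k using Fin.cases with
    | zero => rfl
    | succ j =>
      induction j using Fin.cases with
      | zero => exact hmT.measure_preimage hB.nullMeasurableSet
      | succ j' => exact (hmR j').measure_preimage hB.nullMeasurableSet
  have := le_inv_card (μΩ (n+2) (n+1)) f hm hμ hdisj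
  rw [hf0] at this
  exact_mod_cast this

end Stmt17

namespace Stmt17

lemma numeric (n : ℕ) :
    1 / (2 * Real.exp 1) - 1 / ((n + 2 : ℕ) : ℝ) + 1 / ((n + 3 : ℕ) : ℝ)
      ≤ (1 - 1 / ((n + 3 : ℕ) : ℝ)) ^ (n + 2) := by
  have he : (0:ℝ) < Real.exp 1 := Real.exp_pos 1
  set m : ℝ := ((n + 2 : ℕ) : ℝ) with hm
  have hm0 : (0:ℝ) < m := by positivity
  have hm1 : ((n + 3 : ℕ) : ℝ) = m + 1 := by push_cast [hm]; ring
  have hbase : (1 : ℝ) - 1 / (m + 1) = (1 + 1/m)⁻¹ := by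
    field_simp
    ring
  have hpow : ((1:ℝ) + 1/m) ^ (n + 2) ≤ Real.exp 1 := by
    have h1 : (1:ℝ) + 1/m ≤ Real.exp (1/m) := by
      have := Real.add_one_le_exp (1/m)
      linarith
    have h2 : ((1:ℝ) + 1/m) ^ (n+2) ≤ (Real.exp (1/m)) ^ (n+2) := by
      apply pow_le_pow_left₀ (by positivity) h1
    calc ((1:ℝ) + 1/m) ^ (n+2) ≤ (Real.exp (1/m)) ^ (n+2) := h2
      _ = Real.exp ((n+2 : ℕ) * (1/m)) := by rw [← Real.exp_nat_mul]
      _ = Real.exp 1 := by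
          congr 1
          rw [← hm]
          field_simp
  have hinv : (Real.exp 1)⁻¹ ≤ ((1:ℝ) + 1/m)⁻¹ ^ (n + 2) := by
    rw [inv_pow]
    exact inv_anti₀ (by positivity) hpow
  have hlhs : 1 / (2 * Real.exp 1) - 1 / m + 1 / (m + 1) ≤ (Real.exp 1)⁻¹ := by
    have h23 : 1 / (m + 1) ≤ 1 / m := by
      apply one_div_le_one_div_of_le hm0; linarith
    have : 1 / (2 * Real.exp 1) ≤ (Real.exp 1)⁻¹ := by
      rw [one_div, mul_inv]
      have h2 : (2:ℝ)⁻¹ * (Real.exp 1)⁻¹ ≤ 1 * (Real.exp 1)⁻¹ := by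
        apply mul_le_mul_of_nonneg_right (by norm_num) (by positivity)
      linarith
    linarith
  rw [hm1, hbase]
  calc 1 / (2 * Real.exp 1) - 1 / m + 1 / (m+1) ≤ (Real.exp 1)⁻¹ := hlhs
    _ ≤ _ := hinv

end Stmt17

namespace Stmt17

lemma main {n : ℕ} {𝒱 : Set (ℝ × Set ℝ)} (h𝒱 : IndepFamily (n+2) 𝒱)
    (hA : MeasurableSet {ω : ℝ × (Fin (n+2) → ℝ) × (Fin (n+2) → Fin (n+1) → ℝ) |
      (ω.1, Set.range ω.2.1) ∈ 𝒱})
    (hB : ∀ i : Fin (n+2), MeasurableSet {ω : ℝ × (Fin (n+2) → ℝ) × (Fin (n+2) → Fin (n+1) → ℝ) |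
      (ω.2.1 i, insert ω.1 (Set.range (ω.2.2 i))) ∈ 𝒱}) :
    ENNReal.ofReal (1 / (2 * Real.exp 1) - 1 / ((n+2 : ℕ) : ℝ)) ≤
      μΩ (n+2) (n+1) {ω : ℝ × (Fin (n+2) → ℝ) × (Fin (n+2) → Fin (n+1) → ℝ) |
        (ω.1, Set.range ω.2.1) ∉ 𝒱 ∧
        ∀ i : Fin (n+2), (ω.2.1 i, insert ω.1 (Set.range (ω.2.2 i))) ∉ 𝒱} := by
  set Ω' := ℝ × (Fin (n+2) → ℝ) × (Fin (n+2) → Fin (n+1) → ℝ)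
  set A := {ω : Ω' | (ω.1, Set.range ω.2.1) ∈ 𝒱} with hAdef
  set Bs : Fin (n+2) → Set Ω' :=
    fun i => {ω : Ω' | (ω.2.1 i, insert ω.1 (Set.range (ω.2.2 i))) ∈ 𝒱} with hBdef
  set M : Measure ((Fin (n+2) → ℝ) × (Fin (n+2) → Fin (n+1) → ℝ)) :=
    (Measure.pi fun _ => unif).prod (Measure.pi fun _ => Measure.pi fun _ => unif) with hM
  have hμΩ : μΩ (n+2) (n+1) = unif.prod M := rfl
  set M2 : Measure (ℝ × (Fin (n+1) → ℝ)) := unif.prod (Measure.pi fun _ => unif) with hM2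
  set WW : Set (ℝ × ℝ × (Fin (n+1) → ℝ)) :=
    {q | (q.2.1, insert q.1 (Set.range q.2.2)) ∈ 𝒱} with hWWdef
  have hWW : MeasurableSet WW := by
    have hΦ : Measurable (fun q : ℝ × ℝ × (Fin (n+1) → ℝ) =>
        ((q.1, ((fun _ : Fin (n+2) => q.2.1), (fun _ : Fin (n+2) => q.2.2))) : Ω')) := by
      refine measurable_fst.prodMk (Measurable.prodMk ?_ ?_)
      · exact measurable_pi_lambda _ fun _ => measurable_fst.comp measurable_snd
      · exact measurable_pi_lambda _ fun _ => measurable_snd.comp measurable_snd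
    exact hΦ (hB 0)
  have hWx : ∀ x : ℝ, MeasurableSet (Prod.mk x ⁻¹' WW) :=
    fun x => measurable_prodMk_left hWW
  set g : ℝ → ℝ≥0∞ := fun x => M2 (Prod.mk x ⁻¹' WW) with hgdef
  have hg_meas : Measurable g := measurable_measure_prodMk_left hWW
  have hg_le : ∀ x, g x ≤ 1 := fun x => prob_le_one
  have hg_fin : ∀ x, g x ≠ ∞ := fun x => (lt_of_le_of_lt (hg_le x) ENNReal.one_lt_top).ne
  -- Fubini for B 0
  have hInt_g : ∫⁻ x, g x ∂unif = μΩ (n+2) (n+1) (Bs 0) := by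
    rw [hμΩ, Measure.prod_apply (hB 0)]
    refine (lintegral_congr fun x => ?_).symm
    have hmp : MeasurePreserving
        (fun p : (Fin (n+2) → ℝ) × (Fin (n+2) → Fin (n+1) → ℝ) => (p.1 0, p.2 0)) M M2 :=
      (mp_eval unif 0).prod (mp_eval (Measure.pi fun _ : Fin (n+1) => unif) 0)
    have hset : Prod.mk x ⁻¹' (Bs 0)
        = (fun p : (Fin (n+2) → ℝ) × (Fin (n+2) → Fin (n+1) → ℝ) => (p.1 0, p.2 0)) ⁻¹'
          (Prod.mk x ⁻¹' WW) := rfl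
    rw [hset, hmp.measure_preimage (hWx x).nullMeasurableSet]
  have hA_le := boundA h𝒱 hA
  have hB0_le : μΩ (n+2) (n+1) (Bs 0) ≤ ((n + 3 : ℕ) : ℝ≥0∞)⁻¹ := boundB h𝒱 0 (hB 0)
  have hIg_le : ∫⁻ x, g x ∂unif ≤ ((n+3:ℕ) : ℝ≥0∞)⁻¹ := hInt_g ▸ hB0_le
  -- Fubini for intersection
  have hInter : μΩ (n+2) (n+1) (⋂ i, (Bs i)ᶜ) = ∫⁻ x, (1 - g x)^(n+2) ∂unif := by
    rw [hμΩ, Measure.prod_apply (MeasurableSet.iInter fun i => (hB i).compl)]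
    refine lintegral_congr fun x => ?_
    have hmpH : MeasurePreserving
        (fun p : (Fin (n+2) → ℝ) × (Fin (n+2) → Fin (n+1) → ℝ) =>
          (fun i => (p.1 i, p.2 i) : Fin (n+2) → ℝ × (Fin (n+1) → ℝ)))
        M (Measure.pi fun _ : Fin (n+2) => M2) :=
      (measurePreserving_arrowProdEquivProdArrow ℝ (Fin (n+1) → ℝ) (Fin (n+2))
        (fun _ => unif) (fun _ => Measure.pi fun _ => unif)).symm
        (MeasurableEquiv.arrowProdEquivProdArrow _ _ _)
    have hset : Prod.mk x ⁻¹' (⋂ i, (Bs i)ᶜ)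
        = (fun p : (Fin (n+2) → ℝ) × (Fin (n+2) → Fin (n+1) → ℝ) =>
            (fun i => (p.1 i, p.2 i) : Fin (n+2) → ℝ × (Fin (n+1) → ℝ))) ⁻¹'
          (Set.pi Set.univ fun _ : Fin (n+2) => (Prod.mk x ⁻¹' WW)ᶜ) := by
      ext p
      simp only [Set.mem_preimage, Set.mem_iInter, Set.mem_compl_iff, Set.mem_pi,
        Set.mem_univ, forall_true_left]
      rfl
    rw [hset, hmpH.measure_preimage
      (MeasurableSet.univ_pi fun _ => (hWx x).compl).nullMeasurableSet,
      Measure.pi_pi]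
    have hcompl : M2 ((Prod.mk x ⁻¹' WW)ᶜ) = 1 - g x := prob_compl_eq_one_sub (hWx x)
    rw [Finset.prod_const, hcompl]
    congr 1
    simp [Finset.card_univ]
  -- Jensen
  set G : ℝ → ℝ := fun x => (g x).toReal with hGdef
  have hG_meas : Measurable G := hg_meas.ennreal_toReal
  have hG01 : ∀ x, G x ∈ Set.Icc (0:ℝ) 1 := by
    intro x
    refine ⟨ENNReal.toReal_nonneg, ?_⟩
    have := ENNReal.toReal_mono ENNReal.one_ne_top (hg_le x)
    simpa using this
  have hG_int : Integrable G unif := by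
    refine (integrable_const (1:ℝ)).mono' hG_meas.aestronglyMeasurable ?_
    filter_upwards with x
    rw [Real.norm_eq_abs, abs_of_nonneg (hG01 x).1]
    exact (hG01 x).2
  set φ : ℝ → ℝ := fun t => (1 - t)^(n+2) with hφdef
  have hφ_cont : Continuous φ := by
    apply Continuous.pow
    exact continuous_const.sub continuous_id
  have hφG_int : Integrable (φ ∘ G) unif := by
    refine (integrable_const (1:ℝ)).mono'
      ((hφ_cont.measurable.comp hG_meas).aestronglyMeasurable) ?_
    filter_upwards with x
    have h0 : (0:ℝ) ≤ 1 - G x := by linarith [(hG01 x).2]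
    have h1 : 1 - G x ≤ 1 := by linarith [(hG01 x).1]
    rw [Function.comp_apply, hφdef, Real.norm_eq_abs, abs_of_nonneg (by positivity)]
    exact pow_le_one₀ h0 h1
  have hφ_conv : ConvexOn ℝ (Set.Icc (0:ℝ) 1) φ := by
    have h2 := (convexOn_pow (n+2)).comp_affineMap (AffineMap.lineMap (1:ℝ) (0:ℝ))
    have hsub : Set.Icc (0:ℝ) 1 ⊆ ⇑(AffineMap.lineMap (1:ℝ) (0:ℝ)) ⁻¹' (Set.Ici 0) := by
      intro x hx
      simp only [Set.mem_Icc] at hx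
      simp only [Set.mem_preimage, AffineMap.lineMap_apply, Set.mem_Ici]
      simp only [smul_eq_mul, vsub_eq_sub, vadd_eq_add]
      nlinarith [hx.1, hx.2]
    refine (h2.subset hsub (convex_Icc _ _)).congr ?_
    intro x _
    simp only [Function.comp_apply, AffineMap.lineMap_apply, smul_eq_mul, vsub_eq_sub,
      vadd_eq_add, hφdef]
    ring
  have hJensen : φ (∫ x, G x ∂unif) ≤ ∫ x, φ (G x) ∂unif := by
    have := hφ_conv.map_integral_le hφ_cont.continuousOn isClosed_Icc
      (Filter.Eventually.of_forall hG01) hG_int hφG_int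
    exact this
  have h_int_toReal : ∫ x, G x ∂unif = (∫⁻ x, g x ∂unif).toReal :=
    integral_toReal hg_meas.aemeasurable
      (Filter.Eventually.of_forall fun x => lt_of_le_of_lt (hg_le x) ENNReal.one_lt_top)
  set p : ℝ := (∫⁻ x, g x ∂unif).toReal with hpdef
  have hp0 : 0 ≤ p := ENNReal.toReal_nonneg
  have hp_le : p ≤ 1/((n+3:ℕ):ℝ) := by
    have h1 := ENNReal.toReal_mono (by simp : ((n+3:ℕ):ℝ≥0∞)⁻¹ ≠ ∞) hIg_le
    rwa [ENNReal.toReal_inv, ENNReal.toReal_natCast, ← one_div] at h1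
  have hp1 : p ≤ 1 := by
    have : 1/((n+3:ℕ):ℝ) ≤ 1 := by
      rw [div_le_one (by positivity)]
      exact_mod_cast Nat.one_le_iff_ne_zero.2 (by omega)
    linarith
  -- pointwise identity
  have hpoint : ∀ x, (1 - g x)^(n+2) = ENNReal.ofReal ((1 - G x)^(n+2)) := by
    intro x
    have h1 : (1:ℝ≥0∞) - g x = ENNReal.ofReal (1 - G x) := by
      rw [ENNReal.ofReal_sub _ ENNReal.toReal_nonneg, ENNReal.ofReal_one,
        ENNReal.ofReal_toReal (hg_fin x)]
    rw [h1, ← ENNReal.ofReal_pow (by linarith [(hG01 x).2])]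
  have hlow : ENNReal.ofReal ((1 - p)^(n+2)) ≤ ∫⁻ x, (1 - g x)^(n+2) ∂unif := by
    have e1 : ENNReal.ofReal ((1 - p)^(n+2)) = ENNReal.ofReal (φ (∫ x, G x ∂unif)) := by
      rw [h_int_toReal]
    have e2 : ENNReal.ofReal (φ (∫ x, G x ∂unif)) ≤ ENNReal.ofReal (∫ x, φ (G x) ∂unif) :=
      ENNReal.ofReal_le_ofReal hJensen
    have e3 : ENNReal.ofReal (∫ x, φ (G x) ∂unif) = ∫⁻ x, ENNReal.ofReal (φ (G x)) ∂unif := by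
      refine MeasureTheory.ofReal_integral_eq_lintegral_ofReal hφG_int ?_
      filter_upwards with x
      have h0 : (0:ℝ) ≤ 1 - G x := by linarith [(hG01 x).2]
      positivity
    have e4 : ∫⁻ x, ENNReal.ofReal (φ (G x)) ∂unif = ∫⁻ x, (1 - g x)^(n+2) ∂unif :=
      lintegral_congr fun x => (hpoint x).symm
    calc ENNReal.ofReal ((1 - p)^(n+2)) = ENNReal.ofReal (φ (∫ x, G x ∂unif)) := e1
      _ ≤ ENNReal.ofReal (∫ x, φ (G x) ∂unif) := e2
      _ = ∫⁻ x, ENNReal.ofReal (φ (G x)) ∂unif := e3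
      _ = _ := e4
  -- combine
  set tgt := {ω : Ω' | (ω.1, Set.range ω.2.1) ∉ 𝒱 ∧
      ∀ i : Fin (n+2), (ω.2.1 i, insert ω.1 (Set.range (ω.2.2 i))) ∉ 𝒱} with htgt
  have hsubset : (⋂ i, (Bs i)ᶜ) ⊆ tgt ∪ A := by
    intro ω hω
    by_cases hA' : ω ∈ A
    · exact Or.inr hA'
    · refine Or.inl ⟨hA', fun i => ?_⟩
      have := Set.mem_iInter.1 hω i
      exact this
  have hsplit : μΩ (n+2) (n+1) (⋂ i, (Bs i)ᶜ)
      ≤ μΩ (n+2) (n+1) tgt + ((n+3:ℕ) : ℝ≥0∞)⁻¹ :=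
    le_trans (measure_mono hsubset) (le_trans (measure_union_le _ _)
      (add_le_add_right hA_le _))
  -- real inequality
  have hreal : 1 / (2 * Real.exp 1) - 1 / ((n+2 : ℕ) : ℝ) + 1/((n+3:ℕ):ℝ) ≤ (1 - p)^(n+2) := by
    refine le_trans (numeric n) ?_
    apply pow_le_pow_left₀
    · have : 1/((n+3:ℕ):ℝ) ≤ 1 := by
        rw [div_le_one (by positivity)]
        exact_mod_cast Nat.one_le_iff_ne_zero.2 (by omega)
      linarith
    · linarith
  by_cases hneg : 1 / (2 * Real.exp 1) - 1 / ((n+2 : ℕ) : ℝ) ≤ 0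
  · rw [ENNReal.ofReal_of_nonpos hneg]
    exact zero_le
  push_neg at hneg
  have hofReal : ENNReal.ofReal (1 / (2 * Real.exp 1) - 1 / ((n+2 : ℕ) : ℝ))
      + ((n+3:ℕ) : ℝ≥0∞)⁻¹ ≤ ENNReal.ofReal ((1 - p)^(n+2)) := by
    have hcast : ((n+3:ℕ) : ℝ≥0∞)⁻¹ = ENNReal.ofReal (1/((n+3:ℕ):ℝ)) := by
      rw [one_div, ENNReal.ofReal_inv_of_pos (by positivity), ENNReal.ofReal_natCast]
    rw [hcast, ← ENNReal.ofReal_add (le_of_lt hneg) (by positivity)]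
    exact ENNReal.ofReal_le_ofReal hreal
  have hchain : ENNReal.ofReal (1 / (2 * Real.exp 1) - 1 / ((n+2 : ℕ) : ℝ))
      + ((n+3:ℕ) : ℝ≥0∞)⁻¹ ≤ μΩ (n+2) (n+1) tgt + ((n+3:ℕ) : ℝ≥0∞)⁻¹ :=
    le_trans hofReal (le_trans hlow (le_trans (le_of_eq hInter.symm) hsplit))
  exact (ENNReal.add_le_add_iff_right (by simp)).1 hchain

end Stmt17


/-- One-round survival lower bound: `x`, the `y i`, and all entries of the `S i` are i.i.d.
uniform on `[0,1]`; `{y_1,…,y_Δ}` is `Set.range ω.2.1`, and `S_i ∪ {x}` is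
`insert ω.1 (Set.range (ω.2.2 i))`. The probability that the vertex with rank `x` survives
(no view in `𝒱` at `x` nor at any `y_i`) is at least `1/(2e) − 1/Δ`. -/
theorem stmt17 (Δ : ℕ) (hΔ : 2 ≤ Δ) (𝒱 : Set (ℝ × Set ℝ)) (h𝒱 : IndepFamily Δ 𝒱)
    (hmeas1 : MeasurableSet
      {ω : ℝ × (Fin Δ → ℝ) × (Fin Δ → Fin (Δ - 1) → ℝ) |
        (ω.1, Set.range ω.2.1) ∈ 𝒱})
    (hmeas2 : ∀ i : Fin Δ, MeasurableSet
      {ω : ℝ × (Fin Δ → ℝ) × (Fin Δ → Fin (Δ - 1) → ℝ) |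
        (ω.2.1 i, insert ω.1 (Set.range (ω.2.2 i))) ∈ 𝒱}) :
    ENNReal.ofReal (1 / (2 * Real.exp 1) - 1 / (Δ : ℝ)) ≤
      (unif.prod ((Measure.pi fun _ : Fin Δ => unif).prod
          (Measure.pi fun _ : Fin Δ => Measure.pi fun _ : Fin (Δ - 1) => unif)))
        {ω : ℝ × (Fin Δ → ℝ) × (Fin Δ → Fin (Δ - 1) → ℝ) |
          (ω.1, Set.range ω.2.1) ∉ 𝒱 ∧
          ∀ i : Fin Δ, (ω.2.1 i, insert ω.1 (Set.range (ω.2.2 i))) ∉ 𝒱} := by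
  obtain ⟨m, rfl⟩ : ∃ m, Δ = m + 2 := ⟨Δ - 2, by omega⟩
  exact Stmt17.main h𝒱 hmeas1 hmeas2
end

section
/- Proposition (one-round inclusion upper bound): for every x ∈ [0,1] and every independence family 𝒱 (with measurable membership events), if y is uniform on [0,1] and S is an independent uniform element of 𝒮_{Δ−1}, then Pr[ (y, S ∪ {x}) ∈ 𝒱 ] ≤ 1/Δ. -/
open MeasureTheory
open scoped ENNReal

instance : NullSingletonClass unif := by unfold unif; infer_instance

lemma unif_pi_eq_coord {n : ℕ} (i j : Fin (n + 1)) (hij : i ≠ j) :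
    Measure.pi (fun _ : Fin (n + 1) => unif) {f | f i = f j} = 0 := by
  obtain ⟨k, hk⟩ := Fin.exists_succAbove_eq (Ne.symm hij)
  have hmp := measurePreserving_piFinSuccAbove (fun _ : Fin (n + 1) => unif) i
  set M := MeasurableEquiv.piFinSuccAbove (fun _ : Fin (n + 1) => ℝ) i with hM
  have hB : MeasurableSet {p : ℝ × (Fin n → ℝ) | p.1 = p.2 k} :=
    measurableSet_eq_fun measurable_fst ((measurable_pi_apply k).comp measurable_snd)
  have hpre : {f : Fin (n + 1) → ℝ | f i = f j} = M ⁻¹' {p | p.1 = p.2 k} := by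
    ext f
    simp [hM, MeasurableEquiv.piFinSuccAbove_apply, Fin.removeNth, hk]
  rw [hpre, hmp.measure_preimage hB.nullMeasurableSet, Measure.prod_apply hB]
  have h0 : ∀ a : ℝ, (Measure.pi fun _ : Fin n => unif) {g | a = g k} = 0 := by
    intro a
    have h := Measure.pi_hyperplane (fun _ : Fin n => unif) k a
    rw [← h]
    congr 1
    ext g
    simp [eq_comm]
  simp only [Set.preimage_setOf_eq]
  simpa using lintegral_congr_ae (Filter.Eventually.of_forall h0) |>.trans (by simp)

/-- One-round inclusion upper bound: with `y` uniform on `[0,1]` and `S` the set of `Δ-1`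
i.i.d. uniform points (so that `S ∪ {x}` is a uniform element of `𝒮_Δ` containing `x`),
the probability that `(y, S ∪ {x}) ∈ 𝒱` is at most `1/Δ`. -/
theorem stmt18 (Δ : ℕ) (hΔ : 2 ≤ Δ) (𝒱 : Set (ℝ × Set ℝ)) (h𝒱 : IndepFamily Δ 𝒱)
    (x : ℝ) (hx : x ∈ Set.Icc (0 : ℝ) 1)
    (hmeas : MeasurableSet
      {ω : ℝ × (Fin (Δ - 1) → ℝ) | (ω.1, insert x (Set.range ω.2)) ∈ 𝒱}) :
    (unif.prod (Measure.pi fun _ : Fin (Δ - 1) => unif))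
        {ω : ℝ × (Fin (Δ - 1) → ℝ) | (ω.1, insert x (Set.range ω.2)) ∈ 𝒱} ≤
      ENNReal.ofReal (1 / (Δ : ℝ)) := by
  obtain ⟨n, rfl⟩ : ∃ n, Δ = n + 1 := ⟨Δ - 1, by omega⟩
  set μ : Measure (Fin (n + 1) → ℝ) := Measure.pi (fun _ => unif) with hμ
  set E : Set (ℝ × (Fin n → ℝ)) :=
    {ω | (ω.1, insert x (Set.range ω.2)) ∈ 𝒱} with hE
  set A : Fin (n + 1) → Set (Fin (n + 1) → ℝ) :=
    fun j => {f | (f j, insert x (f '' {j}ᶜ)) ∈ 𝒱} with hA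
  -- relating A 0 to E
  have hmp0 := measurePreserving_piFinSuccAbove (fun _ : Fin (n + 1) => unif) 0
  set M0 := MeasurableEquiv.piFinSuccAbove (fun _ : Fin (n + 1) => ℝ) 0 with hM0
  have hpre0 : M0 ⁻¹' E = A 0 := by
    ext f
    have hr : Set.range (Fin.tail f) = f '' {0}ᶜ := by
      rw [show Fin.tail f = f ∘ Fin.succ from rfl, Set.range_comp, Fin.range_succ]
    simp [hE, hA, hM0, MeasurableEquiv.piFinSuccAbove_apply, hr]
  have hA0meas : MeasurableSet (A 0) := by
    rw [← hpre0]; exact M0.measurable hmeas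
  have hLHS : (unif.prod (Measure.pi fun _ : Fin n => unif)) E = μ (A 0) := by
    rw [← hpre0]
    exact (hmp0.measure_preimage hmeas.nullMeasurableSet).symm
  -- symmetry: each A j has same measure as A 0
  have hswap : ∀ j : Fin (n + 1),
      (MeasurableEquiv.piCongrLeft (fun _ : Fin (n + 1) => ℝ) (Equiv.swap 0 j)) ⁻¹' (A 0)
        = A j := by
    intro j
    set e := Equiv.swap (0 : Fin (n + 1)) j with he
    have hfun : ∀ g : Fin (n + 1) → ℝ,
        (MeasurableEquiv.piCongrLeft (fun _ : Fin (n + 1) => ℝ) e) g = g ∘ e := by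
      intro g
      funext i
      conv_lhs => rw [show i = e (e.symm i) by simp]
      rw [MeasurableEquiv.coe_piCongrLeft, Equiv.piCongrLeft_apply_apply]
      simp [he]
    ext f
    have h1 : (f ∘ e) 0 = f j := by simp [he]
    have h2 : (f ∘ e) '' {0}ᶜ = f '' {j}ᶜ := by
      rw [Set.image_comp]
      rw [Equiv.image_compl]
      simp [he]
    simp only [Set.mem_preimage, hfun, hA, Set.mem_setOf_eq, h1, h2]
  have hAmeas : ∀ j, MeasurableSet (A j) := by
    intro j
    rw [← hswap j]
    exact (MeasurableEquiv.piCongrLeft (fun _ : Fin (n + 1) => ℝ) (Equiv.swap 0 j)).measurable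
      hA0meas
  have hAeq : ∀ j, μ (A j) = μ (A 0) := by
    intro j
    rw [← hswap j]
    exact (measurePreserving_piCongrLeft (fun _ : Fin (n + 1) => unif)
      (Equiv.swap 0 j)).measure_preimage hA0meas.nullMeasurableSet
  -- the good set D
  set D : Set (Fin (n + 1) → ℝ) := {f | Function.Injective f ∧ ∀ i, f i ≠ x} with hD
  have hm1 : ∀ i j : Fin (n + 1), MeasurableSet {f : Fin (n + 1) → ℝ | f i = f j} :=
    fun i j => measurableSet_eq_fun (measurable_pi_apply i) (measurable_pi_apply j)
  have hm2 : ∀ i : Fin (n + 1), MeasurableSet {f : Fin (n + 1) → ℝ | f i = x} :=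
    fun i => measurableSet_eq_fun (measurable_pi_apply i) measurable_const
  have hD' : D = (⋂ i, ⋂ j, ⋂ _ : i ≠ j, {f : Fin (n + 1) → ℝ | f i = f j}ᶜ) ∩
      ⋂ i, {f : Fin (n + 1) → ℝ | f i = x}ᶜ := by
    ext f
    simp only [hD, Set.mem_setOf_eq, Set.mem_inter_iff, Set.mem_iInter, Set.mem_compl_iff]
    constructor
    · rintro ⟨h1, h2⟩
      exact ⟨fun i j hij hf => hij (h1 hf), h2⟩
    · rintro ⟨h1, h2⟩
      refine ⟨fun a b hab => ?_, h2⟩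
      by_contra hne
      exact h1 a b hne hab
  have hDmeas : MeasurableSet D := by
    rw [hD']
    exact (MeasurableSet.iInter fun i => MeasurableSet.iInter fun j =>
      MeasurableSet.iInter fun _ => (hm1 i j).compl).inter
      (MeasurableSet.iInter fun i => (hm2 i).compl)
  have hDc : μ Dᶜ = 0 := by
    have hsub : Dᶜ ⊆ (⋃ i, ⋃ j, ⋃ _ : i ≠ j, {f : Fin (n + 1) → ℝ | f i = f j}) ∪
        ⋃ i, {f : Fin (n + 1) → ℝ | f i = x} := by
      intro f hf
      by_cases hinj : Function.Injective f
      · have : ∃ i, f i = x := by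
          by_contra hno
          push_neg at hno
          exact hf ⟨hinj, hno⟩
        obtain ⟨i, hi⟩ := this
        exact Or.inr (Set.mem_iUnion.2 ⟨i, hi⟩)
      · obtain ⟨a, b, hab, hne⟩ := Function.not_injective_iff.1 hinj
        exact Or.inl (Set.mem_iUnion.2 ⟨a, Set.mem_iUnion.2 ⟨b, Set.mem_iUnion.2 ⟨hne, hab⟩⟩⟩)
    refine measure_mono_null hsub (measure_union_null ?_ ?_)
    · refine measure_iUnion_null fun i => measure_iUnion_null fun j => measure_iUnion_null
        fun hij => ?_
      exact unif_pi_eq_coord i j hij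
    · refine measure_iUnion_null fun i => ?_
      rw [hμ]
      exact Measure.pi_hyperplane (fun _ : Fin (n + 1) => unif) i x
  -- pairwise disjointness on D
  have key : ∀ j k : Fin (n + 1), j ≠ k → ∀ f, f ∈ A j ∩ D → f ∈ A k ∩ D → False := by
    intro j k hjk f hfj hfk
    obtain ⟨hj, hinj, hxn⟩ := hfj
    obtain ⟨hk, -, -⟩ := hfk
    set S := insert x (Set.range f) with hS
    have hxnot : x ∉ Set.range f := by
      rintro ⟨i, rfl⟩
      exact hxn i rfl
    have hcard : S.ncard = (n + 1) + 1 := by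
      rw [hS, Set.ncard_insert_of_notMem hxnot (Set.finite_range f),
        ← Set.image_univ, Set.ncard_image_of_injective _ hinj, Set.ncard_univ]
      simp
    have hdiff : ∀ m : Fin (n + 1), S \ {f m} = insert x (f '' {m}ᶜ) := by
      intro m
      ext a
      simp only [hS, Set.mem_diff, Set.mem_insert_iff, Set.mem_range, Set.mem_image,
        Set.mem_compl_iff, Set.mem_singleton_iff]
      constructor
      · rintro ⟨h1 | ⟨i, rfl⟩, h2⟩
        · exact Or.inl h1
        · exact Or.inr ⟨i, fun him => h2 (by rw [him]), rfl⟩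
      · rintro (rfl | ⟨i, him, rfl⟩)
        · exact ⟨Or.inl rfl, fun h => hxn m h.symm⟩
        · exact ⟨Or.inr ⟨i, rfl⟩, fun h => him (hinj h)⟩
    refine h𝒱.2 S hcard (f j) (Or.inr ⟨j, rfl⟩) (f k) (Or.inr ⟨k, rfl⟩)
      (fun h => hjk (hinj h)) ⟨?_, ?_⟩
    · rw [hdiff j]; exact hj
    · rw [hdiff k]; exact hk
  have hADmeas : ∀ j, MeasurableSet (A j ∩ D) := fun j => (hAmeas j).inter hDmeas
  have hdisj : Pairwise (Function.onFun Disjoint fun j => A j ∩ D) := by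
    intro j k hjk
    rw [Function.onFun, Set.disjoint_left]
    intro f hf hg
    exact key j k hjk f hf hg
  have hsum : (n + 1 : ℝ≥0∞) * μ (A 0) ≤ 1 := by
    have h1 : ∑' j : Fin (n + 1), μ (A j ∩ D) = μ (⋃ j, A j ∩ D) :=
      (measure_iUnion hdisj hADmeas).symm
    have h2 : μ (⋃ j, A j ∩ D) ≤ 1 := prob_le_one
    have h3 : ∀ j, μ (A j ∩ D) = μ (A 0) := fun j => by
      rw [measure_inter_conull hDc, hAeq j]
    calc (n + 1 : ℝ≥0∞) * μ (A 0) = ∑' j : Fin (n + 1), μ (A j ∩ D) := by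
          rw [tsum_fintype]
          simp [h3, Finset.sum_const, mul_comm]
      _ ≤ 1 := h1 ▸ h2
  have hfin : μ (A 0) ≤ ((n : ℝ≥0∞) + 1)⁻¹ := by
    rw [ENNReal.le_inv_iff_mul_le, mul_comm]
    exact hsum
  have hfinal : (unif.prod (Measure.pi fun _ : Fin n => unif)) E ≤
      ENNReal.ofReal (1 / ((n + 1 : ℕ) : ℝ)) := by
    rw [hLHS]
    refine hfin.trans (le_of_eq ?_)
    rw [one_div, ENNReal.ofReal_inv_of_pos (show (0 : ℝ) < ((n + 1 : ℕ) : ℝ) by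
      exact_mod_cast Nat.succ_pos n), ENNReal.ofReal_natCast]
    norm_cast
  exact hfinal
end
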